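/- arXiv:2108.13953 — 7 statements merged into one kernel-verified Lean document; each statement's English description precedes it below -/
import Mathlib

section
/- There exists a constant C > 0 such that for all integers k ≥ 1 and ℓ ≥ 1 with ℓ ≥ 2·√k, the number of vectors s = (s₁, …, s_ℓ) of nonnegative integers satisfying Σ_{i=1}^{ℓ} s_i + 2·Σ_{1 ≤ i < j ≤ ℓ} min(s_i, s_j) < k is at most (ℓ/√k)^{C·√k} · e^{C·√k}. -/
/-!
Write each `s i` in binary and let `E_b` be the set of indices whose `b`-th bit is set. On `E_b`
every `s i` is at least `2 ^ b`, and the weight `∑ s i + 2 ∑_{i<j} min (s i) (s j)` is the sum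
of `min (s i) (s j)` over all ordered pairs, so it is at least `#E_b ^ 2 * 2 ^ b`; hence
`#E_b ≤ x_b := √k / √2 ^ b`. Since `s` is determined by its bit layers `E_0, …, E_{k-1}`, the
count is at most `∏_b #{E | #E ≤ x_b} ≤ ∏_b (e ℓ / x_b) ^ x_b`, and the exponent
`∑_b x_b (log (ℓ / x_b) + 1)` is a geometric-type series of size `O(√k (log (ℓ / √k) + 1))`.
-/

open Finset Real

section ExpansionWeight

variable {ι : Type*} [Fintype ι]

def bitLayer (s : ι → ℕ) (b : ℕ) : Finset ι := univ.filter fun i => (s i).testBit b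

theorem bitLayer_injOn (k : ℕ) :
    Set.InjOn (fun s (b : Fin k) => bitLayer s b) {s : ι → ℕ | ∀ i, s i < 2 ^ k} := by
  intro s hs t ht hst
  funext i
  refine Nat.eq_of_testBit_eq fun b => ?_
  by_cases hb : b < k
  · have h := Finset.ext_iff.1 (congrFun hst ⟨b, hb⟩) i
    simp only [bitLayer, mem_filter, mem_univ, true_and] at h
    exact Bool.eq_iff_iff.2 h
  · have hk : 2 ^ k ≤ 2 ^ b := Nat.pow_le_pow_right two_pos (not_lt.1 hb)
    rw [Nat.testBit_eq_false_of_lt ((hs i).trans_le hk),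
      Nat.testBit_eq_false_of_lt ((ht i).trans_le hk)]

variable [LinearOrder ι]

theorem sum_sum_eq_sum_add_two_nsmul_sum_lt {M : Type*} [AddCommMonoid M] (f : ι → ι → M)
    (hf : ∀ i j, f i j = f j i) :
    ∑ i, ∑ j, f i j =
      ∑ i, f i i + 2 • ∑ p ∈ univ.filter (fun p : ι × ι => p.1 < p.2), f p.1 p.2 := by
  have hsplit : ∀ i j, f i j = ((if i < j then f i j else 0) + if j < i then f i j else 0) +
      if i = j then f i j else 0 := by
    intro i j
    rcases lt_trichotomy i j with h | rfl | h
    · simp [h, h.not_gt, h.ne]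
    · simp
    · simp [h, h.not_gt, h.ne']
  have hlower : ∑ i, ∑ j, (if j < i then f i j else 0) =
      ∑ i, ∑ j, if i < j then f i j else 0 := by
    rw [Finset.sum_comm]
    simp only [hf]
  calc ∑ i, ∑ j, f i j
      = ∑ i, ∑ j, (((if i < j then f i j else 0) + if j < i then f i j else 0) +
          if i = j then f i j else 0) :=
        sum_congr rfl fun i _ => sum_congr rfl fun j _ => hsplit i j
    _ = _ := by
      simp only [sum_add_distrib, hlower, sum_ite_eq, mem_univ, if_true, two_nsmul, sum_filter,
        Fintype.sum_prod_type]
      abel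

def expansionWeight (s : ι → ℕ) : ℕ :=
  (∑ i, s i) + 2 * ∑ p ∈ univ.filter (fun p : ι × ι => p.1 < p.2), min (s p.1) (s p.2)

theorem sum_sum_min_eq_expansionWeight (s : ι → ℕ) :
    ∑ i, ∑ j, min (s i) (s j) = expansionWeight s := by
  rw [sum_sum_eq_sum_add_two_nsmul_sum_lt _ fun i j => min_comm _ _]
  simp [expansionWeight]

theorem le_expansionWeight (s : ι → ℕ) (i : ι) : s i ≤ expansionWeight s :=
  (single_le_sum (fun j _ => Nat.zero_le (s j)) (mem_univ i)).trans (Nat.le_add_right _ _)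

theorem card_sq_mul_le_expansionWeight {s : ι → ℕ} {E : Finset ι} {c : ℕ}
    (h : ∀ i ∈ E, c ≤ s i) : #E ^ 2 * c ≤ expansionWeight s :=
  calc #E ^ 2 * c = ∑ i ∈ E, ∑ j ∈ E, c := by simp [sq, mul_assoc]
    _ ≤ ∑ i ∈ E, ∑ j ∈ E, min (s i) (s j) :=
      sum_le_sum fun i hi => sum_le_sum fun j hj => le_min (h i hi) (h j hj)
    _ ≤ ∑ i, ∑ j, min (s i) (s j) :=
      (sum_le_sum fun i _ => sum_le_sum_of_subset (subset_univ E)).trans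
        (sum_le_sum_of_subset (subset_univ E))
    _ = expansionWeight s := sum_sum_min_eq_expansionWeight s

theorem card_bitLayer_sq_mul_le (s : ι → ℕ) (b : ℕ) :
    #(bitLayer s b) ^ 2 * 2 ^ b ≤ expansionWeight s :=
  card_sq_mul_le_expansionWeight fun _ hi => Nat.ge_two_pow_of_testBit (mem_filter.1 hi).2

theorem ncard_expansionWeight_lt_le_prod (k : ℕ) :
    {s : ι → ℕ | expansionWeight s < k}.ncard ≤
      ∏ b : Fin k, #{E : Finset ι | #E ^ 2 * 2 ^ (b : ℕ) < k} := by
  classical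
  rw [← Fintype.card_piFinset, ← Set.ncard_coe_finset]
  refine Set.ncard_le_ncard_of_injOn _ (fun s hs => ?_) ((bitLayer_injOn k).mono fun s hs => ?_)
  · simp only [mem_coe, Fintype.mem_piFinset, mem_filter, mem_univ, true_and]
    exact fun b => (card_bitLayer_sq_mul_le s b).trans_lt hs
  · exact fun i => (le_expansionWeight s i).trans_lt (hs.trans Nat.lt_two_pow_self)

end ExpansionWeight

theorem card_filter_card_le_le_rpow_mul_exp (α : Type*) [Fintype α] {x : ℝ} (hx : 0 < x)
    (hxα : x ≤ Fintype.card α) :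
    (#{E : Finset α | (#E : ℝ) ≤ x} : ℝ) ≤ (Fintype.card α / x) ^ x * exp x := by
  set n := Fintype.card α
  set t := x / n
  have hn : (0 : ℝ) < n := hx.trans_le hxα
  have ht : 0 < t := div_pos hx hn
  have ht1 : t ≤ 1 := (div_le_one hn).2 hxα
  -- weight each `E` by `t ^ #E ≥ t ^ x`; over all `E` these weights sum to `(1 + t) ^ n`
  have key : #{E : Finset α | (#E : ℝ) ≤ x} * t ^ x ≤ exp x :=
    calc #{E : Finset α | (#E : ℝ) ≤ x} * t ^ x
        = ∑ E ∈ {E : Finset α | (#E : ℝ) ≤ x}, t ^ x := by rw [sum_const, nsmul_eq_mul]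
      _ ≤ ∑ E ∈ {E : Finset α | (#E : ℝ) ≤ x}, t ^ #E := sum_le_sum fun E hE => by
          rw [← rpow_natCast]
          exact rpow_le_rpow_of_exponent_ge ht ht1 (mem_filter.1 hE).2
      _ ≤ ∑ E : Finset α, t ^ #E :=
          sum_le_sum_of_subset_of_nonneg (filter_subset _ _) fun _ _ _ => by positivity
      _ = (t + 1) ^ n := by simpa using Fintype.sum_pow_mul_eq_add_pow α t 1
      _ ≤ exp t ^ n := pow_le_pow_left₀ (by positivity) (add_one_le_exp t) n
      _ = exp x := by rw [← exp_nat_mul, mul_div_cancel₀ x hn.ne']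
  calc (#{E : Finset α | (#E : ℝ) ≤ x} : ℝ) ≤ exp x / t ^ x :=
        (le_div_iff₀ (rpow_pos_of_pos ht x)).2 key
    _ = (n / x) ^ x * exp x := by
        rw [div_eq_mul_inv, ← inv_rpow ht.le, inv_div, mul_comm]

theorem card_filter_card_sq_mul_two_pow_lt_le (α : Type*) [Fintype α] {k : ℕ} (hk : 1 ≤ k)
    (hkα : √k ≤ Fintype.card α) (b : ℕ) :
    (#{E : Finset α | #E ^ 2 * 2 ^ b < k} : ℝ) ≤
      exp (√k / √2 ^ b * (log (Fintype.card α / √k * √2 ^ b) + 1)) := by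
  set x := √k / √2 ^ b
  have hκ : 0 < √k := Real.sqrt_pos.2 (by exact_mod_cast hk)
  have hx : 0 < x := by positivity
  have hcard : #{E : Finset α | #E ^ 2 * 2 ^ b < k} ≤ #{E : Finset α | (#E : ℝ) ≤ x} := by
    refine card_le_card fun E => ?_
    simp only [mem_filter, mem_univ, true_and]
    intro hE
    rw [le_div_iff₀ (by positivity), Real.le_sqrt (by positivity) (by positivity), mul_pow,
      ← pow_mul, mul_comm b, pow_mul, Real.sq_sqrt zero_le_two]
    exact_mod_cast hE.le
  have hxα : x ≤ Fintype.card α :=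
    (div_le_self hκ.le (one_le_pow₀ (Real.one_le_sqrt.2 one_le_two))).trans hkα
  calc (#{E : Finset α | #E ^ 2 * 2 ^ b < k} : ℝ) ≤ (Fintype.card α / x) ^ x * exp x :=
        (Nat.cast_le.2 hcard).trans (card_filter_card_le_le_rpow_mul_exp α hx hxα)
    _ = _ := by
        rw [rpow_def_of_pos (div_pos (hx.trans_le hxα) hx), ← exp_add, div_div_eq_mul_div,
          mul_div_right_comm]
        ring_nf

theorem sum_range_mul_geometric_le {θ : ℝ} (h0 : 0 ≤ θ) (h1 : θ < 1) (n : ℕ) :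
    ∑ b ∈ range n, (b : ℝ) * θ ^ b ≤ θ / (1 - θ) ^ 2 := by
  have hθ : ‖θ‖ < 1 := by rwa [Real.norm_of_nonneg h0]
  have hsum : Summable fun b : ℕ => (b : ℝ) * θ ^ b := by
    simpa using summable_pow_mul_geometric_of_norm_lt_one 1 hθ
  rw [← tsum_coe_mul_geometric_of_norm_lt_one hθ]
  exact hsum.sum_le_tsum _ fun b _ => by positivity

theorem sum_range_geometric_entropy_le {κ y : ℝ} (hκ : 0 < κ) (hy : 1 ≤ y) (n : ℕ) :
    ∑ b ∈ range n, κ / √2 ^ b * (log (y * √2 ^ b) + 1) ≤ 10 * κ * (log y + 1) := by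
  set θ : ℝ := (√2)⁻¹
  have hθ0 : 0 ≤ θ := by positivity
  have hθ : θ ≤ 3 / 4 := by
    rw [inv_le_comm₀ (by positivity) (by norm_num), Real.le_sqrt (by norm_num) (by norm_num)]
    norm_num
  have hlog : log √2 ≤ 1 / 2 := by
    rw [Real.log_sqrt zero_le_two]
    linarith [Real.log_two_lt_d9]
  have hL : 0 ≤ log y := log_nonneg hy
  have hterm : ∀ b : ℕ, κ / √2 ^ b * (log (y * √2 ^ b) + 1) ≤
      κ * (log y + 1) * θ ^ b + κ / 2 * (b * θ ^ b) := fun b => by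
    rw [log_mul (by positivity) (by positivity), log_pow, div_eq_mul_inv, ← inv_pow]
    have : 0 ≤ κ * θ ^ b * b := by positivity
    nlinarith
  have hgeom : ∑ b ∈ range n, θ ^ b ≤ 4 := by
    have h := geom_sum_Ico_le_of_lt_one (m := 0) (n := n) hθ0 (by linarith)
    rw [Nat.Ico_zero_eq_range, pow_zero] at h
    refine h.trans ?_
    rw [div_le_iff₀] <;> linarith
  have hmul : ∑ b ∈ range n, (b : ℝ) * θ ^ b ≤ 12 := by
    refine (sum_range_mul_geometric_le hθ0 (by linarith) n).trans ?_
    rw [div_le_iff₀ (by nlinarith)]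
    nlinarith
  calc _ ≤ ∑ b ∈ range n, (κ * (log y + 1) * θ ^ b + κ / 2 * (b * θ ^ b)) :=
        sum_le_sum fun b _ => hterm b
    _ = κ * (log y + 1) * ∑ b ∈ range n, θ ^ b + κ / 2 * ∑ b ∈ range n, (b : ℝ) * θ ^ b := by
        rw [sum_add_distrib, mul_sum, mul_sum]
    _ ≤ κ * (log y + 1) * 4 + κ / 2 * 12 := by gcongr
    _ ≤ 10 * κ * (log y + 1) := by nlinarith

/-- There is a constant `C > 0` such that for all `k, ℓ ≥ 1` with `ℓ ≥ 2√k`, the number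
of vectors `s : Fin ℓ → ℕ` with `∑ᵢ sᵢ + 2·∑_{i<j} min(sᵢ,sⱼ) < k` is at most
`(ℓ/√k)^{C√k} · e^{C√k}`. -/
theorem count_expansion_vectors :
    ∃ C : ℝ, 0 < C ∧ ∀ k l : ℕ, 1 ≤ k → 1 ≤ l → 2 * Real.sqrt k ≤ (l : ℝ) →
      (({s : Fin l → ℕ |
          (∑ i, s i) +
            2 * ∑ p ∈ Finset.univ.filter (fun p : Fin l × Fin l => p.1 < p.2),
                  min (s p.1) (s p.2) < k}).ncard : ℝ) ≤
        ((l : ℝ) / Real.sqrt k) ^ (C * Real.sqrt k) * Real.exp (C * Real.sqrt k) := by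
  refine ⟨10, by norm_num, fun k l hk _ hkl => ?_⟩
  have hκ : 0 < √k := Real.sqrt_pos.2 (by exact_mod_cast hk)
  have hκl : √k ≤ Fintype.card (Fin l) := by rw [Fintype.card_fin]; linarith
  have hlκ : 1 ≤ l / √k := by rw [le_div_iff₀ hκ]; linarith
  calc (({s : Fin l → ℕ | expansionWeight s < k}).ncard : ℝ)
      ≤ ∏ b : Fin k, (#{E : Finset (Fin l) | #E ^ 2 * 2 ^ (b : ℕ) < k} : ℝ) := by
        exact_mod_cast ncard_expansionWeight_lt_le_prod k
    _ ≤ ∏ b : Fin k, exp (√k / √2 ^ (b : ℕ) * (log (l / √k * √2 ^ (b : ℕ)) + 1)) :=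
        prod_le_prod (fun _ _ => by positivity) fun b _ => by
          simpa using card_filter_card_sq_mul_two_pow_lt_le (Fin l) hk hκl b
    _ = exp (∑ b ∈ range k, √k / √2 ^ b * (log (l / √k * √2 ^ b) + 1)) := by
        rw [exp_sum, Fin.prod_univ_eq_prod_range
          fun b => exp (√k / √2 ^ b * (log (l / √k * √2 ^ b) + 1))]
    _ ≤ exp (10 * √k * (log (l / √k) + 1)) :=
        exp_le_exp.2 (sum_range_geometric_entropy_le hκ hlκ k)
    _ = (l / √k) ^ (10 * √k) * exp (10 * √k) := by
        rw [rpow_def_of_pos (by linarith), ← exp_add]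
        ring_nf
end

section
/- Let k ≥ 1 and ℓ ≥ 1 be integers with ℓ ≥ 2·⌊√k⌋ − ⌊√(k/2)⌋. Define z₀ := ℓ − ⌊√k⌋ and z_i := ⌊√(k/i)⌋ − ⌊√(k/(i+1))⌋ for i = 1, …, k. If m = (m₀, m₁, …, m_k) is a vector of nonnegative integers satisfying m₀ + m₁ + ⋯ + m_k = ℓ and, for every α = 1, …, k, Σ_{i=α}^{k} m_i ≤ ⌊√(k/α)⌋, then the multinomial coefficient ℓ!/(m₀!·m₁!·⋯·m_k!) is at most ℓ!/(z₀!·z₁!·⋯·z_k!). -/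
open Finset

private lemma inv_gap_eq {x : ℝ} (hx : 0 < x) :
    1/Real.sqrt x - 1/Real.sqrt (x+1)
      = 1/(Real.sqrt x * Real.sqrt (x+1) * (Real.sqrt x + Real.sqrt (x+1))) := by
  have h1 : 0 < Real.sqrt x := Real.sqrt_pos.2 hx
  have h2 : 0 < Real.sqrt (x+1) := Real.sqrt_pos.2 (by linarith)
  have e1 : Real.sqrt x ^ 2 = x := Real.sq_sqrt hx.le
  have e2 : Real.sqrt (x+1) ^ 2 = x + 1 := Real.sq_sqrt (by linarith)
  field_simp
  nlinarith [h1, h2, e1, e2, mul_pos h1 h2]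

private lemma inv_gap_anti {a b : ℝ} (ha : 0 < a) (hab : a ≤ b) :
    1/Real.sqrt b - 1/Real.sqrt (b+1) ≤ 1/Real.sqrt a - 1/Real.sqrt (a+1) := by
  have hb : (0:ℝ) < b := lt_of_lt_of_le ha hab
  rw [inv_gap_eq ha, inv_gap_eq hb]
  have h1 : 0 < Real.sqrt a := Real.sqrt_pos.2 ha
  have h2 : 0 < Real.sqrt (a+1) := Real.sqrt_pos.2 (by linarith)
  have h3 : Real.sqrt a ≤ Real.sqrt b := Real.sqrt_le_sqrt hab
  have h4 : Real.sqrt (a+1) ≤ Real.sqrt (b+1) := Real.sqrt_le_sqrt (by linarith)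
  apply one_div_le_one_div_of_le
  · positivity
  · have : Real.sqrt a * Real.sqrt (a+1) ≤ Real.sqrt b * Real.sqrt (b+1) := by
      apply mul_le_mul h3 h4 h2.le (by positivity)
    exact mul_le_mul this (by linarith) (by positivity) (by positivity)

private lemma real_gap_anti (k : ℕ) {a b : ℝ} (ha : 0 < a) (hab : a ≤ b) :
    Real.sqrt ((k:ℝ)/b) - Real.sqrt ((k:ℝ)/(b+1)) ≤
      Real.sqrt ((k:ℝ)/a) - Real.sqrt ((k:ℝ)/(a+1)) := by
  have hk : (0:ℝ) ≤ (k:ℝ) := Nat.cast_nonneg k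
  rw [Real.sqrt_div hk, Real.sqrt_div hk, Real.sqrt_div hk, Real.sqrt_div hk]
  have h := inv_gap_anti ha hab
  have hsk : 0 ≤ Real.sqrt k := Real.sqrt_nonneg _
  have e : ∀ y : ℝ, Real.sqrt k / y = Real.sqrt k * (1/y) := by intro y; ring
  rw [e, e, e, e]
  nlinarith [h, hsk]

private noncomputable def sfl (k α : ℕ) : ℕ := ⌊Real.sqrt ((k:ℝ)/(α:ℝ))⌋₊

private lemma sfl_anti (k : ℕ) {a b : ℕ} (ha : 1 ≤ a) (hab : a ≤ b) : sfl k b ≤ sfl k a := by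
  unfold sfl
  apply Nat.floor_mono
  apply Real.sqrt_le_sqrt
  have ha' : (0:ℝ) < a := by exact_mod_cast ha
  have hab' : (a:ℝ) ≤ b := by exact_mod_cast hab
  have hk : (0:ℝ) ≤ k := Nat.cast_nonneg k
  apply div_le_div_of_nonneg_left hk ha' hab'

private lemma sfl_succ_k (k : ℕ) : sfl k (k+1) = 0 := by
  unfold sfl
  rw [Nat.floor_eq_zero]
  rw [show ((1:ℝ)) = Real.sqrt 1 by rw [Real.sqrt_one]]
  apply Real.sqrt_lt_sqrt (by positivity)
  rw [div_lt_one (by positivity)]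
  exact_mod_cast Nat.lt_succ_self k

private lemma floor_gap (k : ℕ) {a b : ℕ} (ha : 1 ≤ a) (hab : a ≤ b) :
    (sfl k b : ℤ) - sfl k (b+1) ≤ (sfl k a : ℤ) - sfl k (a+1) + 1 := by
  have h2 : (sfl k b : ℤ) - sfl k (b+1) < (sfl k a : ℤ) - sfl k (a+1) + 2 := by
    rw [← @Int.cast_lt ℝ]
    unfold sfl
    push_cast
    have ha' : (0:ℝ) < (a:ℝ) := by exact_mod_cast ha
    have hab' : (a:ℝ) ≤ (b:ℝ) := by exact_mod_cast hab
    have g := real_gap_anti k ha' hab'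
    have u1 : ((⌊Real.sqrt ((k:ℝ)/(b:ℝ))⌋₊ : ℕ):ℝ) ≤ Real.sqrt ((k:ℝ)/(b:ℝ)) :=
      Nat.floor_le (Real.sqrt_nonneg _)
    have u2 : Real.sqrt ((k:ℝ)/((b:ℝ)+1)) < (⌊Real.sqrt ((k:ℝ)/((b:ℝ)+1))⌋₊ : ℝ) + 1 :=
      Nat.lt_floor_add_one _
    have u3 : ((⌊Real.sqrt ((k:ℝ)/((a:ℝ)+1))⌋₊ : ℕ):ℝ) ≤ Real.sqrt ((k:ℝ)/((a:ℝ)+1)) :=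
      Nat.floor_le (Real.sqrt_nonneg _)
    have u4 : Real.sqrt ((k:ℝ)/(a:ℝ)) < (⌊Real.sqrt ((k:ℝ)/(a:ℝ))⌋₊ : ℝ) + 1 :=
      Nat.lt_floor_add_one _
    linarith
  omega

private noncomputable def SS (k l : ℕ) (γ : ℕ) : ℕ := if γ = 0 then l else sfl k γ

private def TT (k : ℕ) (m : Fin (k+1) → ℕ) (γ : ℕ) : ℕ :=
  ∑ i ∈ Finset.univ.filter (fun i : Fin (k+1) => γ ≤ (i:ℕ)), m i

private noncomputable def zz (k l : ℕ) : Fin (k+1) → ℕ := fun i =>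
  if (i:ℕ) = 0 then l - sfl k 1 else sfl k (i:ℕ) - sfl k ((i:ℕ)+1)

private lemma TT_zero (k : ℕ) (m : Fin (k+1) → ℕ) : TT k m 0 = ∑ i, m i := by
  unfold TT
  congr 1
  ext i
  simp

private lemma TT_top (k : ℕ) (m : Fin (k+1) → ℕ) {γ : ℕ} (h : k+1 ≤ γ) : TT k m γ = 0 := by
  unfold TT
  rw [Finset.sum_eq_zero_iff.2]
  intro i hi
  simp at hi
  omega

private lemma TT_succ (k : ℕ) (m : Fin (k+1) → ℕ) (i : Fin (k+1)) :
    TT k m (i:ℕ) = m i + TT k m ((i:ℕ)+1) := by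
  unfold TT
  have hset : Finset.univ.filter (fun j : Fin (k+1) => (i:ℕ) ≤ (j:ℕ)) =
      insert i (Finset.univ.filter (fun j : Fin (k+1) => (i:ℕ)+1 ≤ (j:ℕ))) := by
    ext j
    simp [Fin.ext_iff]
    omega
  rw [hset, Finset.sum_insert]
  simp

private lemma multinomial_le_of_prod_le {n : ℕ} (f g : Fin n → ℕ)
    (hsum : ∑ i, f i = ∑ i, g i)
    (hprod : ∏ i, (g i).factorial ≤ ∏ i, (f i).factorial) :
    Nat.multinomial Finset.univ f ≤ Nat.multinomial Finset.univ g := by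
  have hf := Nat.multinomial_spec Finset.univ f
  have hg := Nat.multinomial_spec Finset.univ g
  have hpos : 0 < ∏ i, (g i).factorial :=
    Finset.prod_pos (fun i _ => Nat.factorial_pos _)
  apply Nat.le_of_mul_le_mul_left ?_ hpos
  calc (∏ i, (g i).factorial) * Nat.multinomial Finset.univ f
      ≤ (∏ i, (f i).factorial) * Nat.multinomial Finset.univ f := by
        exact Nat.mul_le_mul_right _ hprod
    _ = (∑ i, f i).factorial := hf
    _ = (∑ i, g i).factorial := by rw [hsum]
    _ = (∏ i, (g i).factorial) * Nat.multinomial Finset.univ g := hg.symm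

private lemma sum_move {n : ℕ} (m : Fin n → ℕ) (i j : Fin n) (hij : i ≠ j)
    (h1 : 1 ≤ m i) (s : Finset (Fin n)) :
    ∑ x ∈ s, (Function.update (Function.update m i (m i - 1)) j (m j + 1)) x
      + (if i ∈ s then 1 else 0)
    = ∑ x ∈ s, m x + (if j ∈ s then 1 else 0) := by
  classical
  by_cases hj : j ∈ s
  · rw [Finset.sum_update_of_mem hj]
    by_cases hi : i ∈ s
    · have hi' : i ∈ s \ {j} := by simp [hi, hij]
      rw [Finset.sum_update_of_mem hi']
      have e1 : ∑ x ∈ s, m x = m j + ∑ x ∈ s \ {j}, m x := by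
        rw [Finset.sum_eq_sum_sdiff_singleton_add hj]; ring
      have e2 : ∑ x ∈ s \ {j}, m x = m i + ∑ x ∈ (s \ {j}) \ {i}, m x := by
        rw [Finset.sum_eq_sum_sdiff_singleton_add hi']; ring
      simp only [hi, if_pos, hj]
      omega
    · have hi' : i ∉ s \ {j} := by simp [hi]
      rw [Finset.sum_update_of_notMem hi']
      have e1 : ∑ x ∈ s, m x = m j + ∑ x ∈ s \ {j}, m x := by
        rw [Finset.sum_eq_sum_sdiff_singleton_add hj]; ring
      simp only [hi, if_neg, hj, if_pos, not_false_iff]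
      omega
  · rw [Finset.sum_update_of_notMem hj]
    by_cases hi : i ∈ s
    · rw [Finset.sum_update_of_mem hi]
      have e1 : ∑ x ∈ s, m x = m i + ∑ x ∈ s \ {i}, m x := by
        rw [Finset.sum_eq_sum_sdiff_singleton_add hi]; ring
      simp only [hi, if_pos, hj, if_neg, not_false_iff]
      omega
    · rw [Finset.sum_update_of_notMem hi]
      simp [hi, hj]

private lemma prod_move {n : ℕ} (m : Fin n → ℕ) (i j : Fin n) (hij : i ≠ j)
    (h2 : m j + 1 ≤ m i) :
    ∏ x, ((Function.update (Function.update m i (m i - 1)) j (m j + 1)) x).factorial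
      ≤ ∏ x, (m x).factorial := by
  classical
  set m' := Function.update (Function.update m i (m i - 1)) j (m j + 1) with hm'
  have hju : j ∈ (Finset.univ : Finset (Fin n)) := Finset.mem_univ j
  have hiu : i ∈ (Finset.univ.erase j) := by simp [hij]
  have key : ∀ f : Fin n → ℕ,
      ∏ x, (f x).factorial
        = (f j).factorial * ((f i).factorial * ∏ x ∈ (Finset.univ.erase j).erase i, (f x).factorial) := by
    intro f
    rw [← Finset.mul_prod_erase _ _ hju, ← Finset.mul_prod_erase _ _ hiu]
  rw [key m', key m]
  have hrest : ∏ x ∈ (Finset.univ.erase j).erase i, (m' x).factorial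
      = ∏ x ∈ (Finset.univ.erase j).erase i, (m x).factorial := by
    apply Finset.prod_congr rfl
    intro x hx
    simp only [Finset.mem_erase] at hx
    rw [hm']
    rw [Function.update_of_ne hx.2.1, Function.update_of_ne hx.1]
  rw [hrest]
  have hmi' : m' i = m i - 1 := by
    rw [hm', Function.update_of_ne hij, Function.update_self]
  have hmj' : m' j = m j + 1 := by rw [hm', Function.update_self]
  rw [hmi', hmj']
  have e1 : (m j + 1).factorial = (m j + 1) * (m j).factorial := Nat.factorial_succ _
  have e2 : (m i).factorial = m i * (m i - 1).factorial := by
    conv_lhs => rw [show m i = (m i - 1) + 1 by omega]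
    rw [Nat.factorial_succ]
    congr 1
    omega
  rw [e1, e2]
  have : (m j + 1) * (m i - 1).factorial ≤ m i * (m i - 1).factorial :=
    Nat.mul_le_mul_right _ h2
  calc (m j + 1) * (m j).factorial * ((m i - 1).factorial * ∏ x ∈ (Finset.univ.erase j).erase i, (m x).factorial)
      = ((m j + 1) * (m i - 1).factorial) * ((m j).factorial * ∏ x ∈ (Finset.univ.erase j).erase i, (m x).factorial) := by ring
    _ ≤ (m i * (m i - 1).factorial) * ((m j).factorial * ∏ x ∈ (Finset.univ.erase j).erase i, (m x).factorial) := Nat.mul_le_mul_right _ this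
    _ = (m j).factorial * (m i * (m i - 1).factorial * ∏ x ∈ (Finset.univ.erase j).erase i, (m x).factorial) := by ring

private lemma deficit_zero (k l : ℕ) (hk : 1 ≤ k) (m : Fin (k+1) → ℕ)
    (hsum : ∑ i, m i = l)
    (htail : ∀ γ : ℕ, 1 ≤ γ → γ ≤ k → TT k m γ ≤ sfl k γ)
    (hdef : ∑ γ ∈ Finset.Icc 1 k, (sfl k γ - TT k m γ) = 0) :
    m = zz k l := by
  have heq : ∀ γ : ℕ, 1 ≤ γ → γ ≤ k → TT k m γ = sfl k γ := by
    intro γ h1 h2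
    have := (Finset.sum_eq_zero_iff.1 hdef) γ (by simp [Finset.mem_Icc]; omega)
    have := htail γ h1 h2
    omega
  funext i
  have hik : (i:ℕ) ≤ k := by omega
  have hstep : TT k m (i:ℕ) = m i + TT k m ((i:ℕ)+1) := TT_succ k m i
  by_cases h0 : (i:ℕ) = 0
  · have h1 : TT k m ((i:ℕ)+1) = sfl k 1 := by rw [h0]; exact heq 1 le_rfl hk
    have h2 : TT k m (i:ℕ) = l := by rw [h0, TT_zero, hsum]
    simp only [zz, h0, if_pos]
    omega
  · have h1 : 1 ≤ (i:ℕ) := by omega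
    have h2 : TT k m (i:ℕ) = sfl k (i:ℕ) := heq _ h1 hik
    have h3 : TT k m ((i:ℕ)+1) = sfl k ((i:ℕ)+1) := by
      by_cases hik' : (i:ℕ) = k
      · rw [hik', TT_top k m (le_refl (k+1)), sfl_succ_k]
      · exact heq _ (by omega) (by omega)
    simp only [zz, h0, if_neg, if_false]
    omega

private lemma main_ind (k l : ℕ) (hk : 1 ≤ k)
    (hl1 : sfl k 1 ≤ l)
    (hz0 : (sfl k 1 : ℤ) - sfl k 2 ≤ (l : ℤ) - sfl k 1) :
    ∀ d : ℕ, ∀ m : Fin (k+1) → ℕ,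
      (∑ i, m i = l) →
      (∀ γ : ℕ, 1 ≤ γ → γ ≤ k → TT k m γ ≤ sfl k γ) →
      (∑ γ ∈ Finset.Icc 1 k, (sfl k γ - TT k m γ)) ≤ d →
      Nat.multinomial Finset.univ m ≤ Nat.multinomial Finset.univ (zz k l) := by
  intro d
  induction d with
  | zero =>
    intro m hsum htail hdef
    rw [deficit_zero k l hk m hsum htail (by omega)]
  | succ d ih =>
    intro m hsum htail hdef
    by_cases hzero : ∑ γ ∈ Finset.Icc 1 k, (sfl k γ - TT k m γ) = 0
    · rw [deficit_zero k l hk m hsum htail hzero]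
    -- setup
    obtain ⟨D, hDdef⟩ : ∃ D : ℕ → ℕ, ∀ γ, D γ = sfl k γ - TT k m γ :=
      ⟨_, fun _ => rfl⟩
    obtain ⟨γ₀, hγ₀mem, hγ₀⟩ := Finset.exists_ne_zero_of_sum_ne_zero hzero
    set Dmax : ℕ := (Finset.Icc 1 k).sup D with hDmaxdef
    have hDle : ∀ γ, 1 ≤ γ → γ ≤ k → D γ ≤ Dmax := by
      intro γ h1 h2
      exact Finset.le_sup (by simp [Finset.mem_Icc]; omega)
    have hγ₀mem' : 1 ≤ γ₀ ∧ γ₀ ≤ k := by simpa [Finset.mem_Icc] using hγ₀mem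
    have hDγ₀ : 1 ≤ D γ₀ := by rw [hDdef]; omega
    have hDmax1 : 1 ≤ Dmax := le_trans hDγ₀ (hDle γ₀ hγ₀mem'.1 hγ₀mem'.2)
    -- basic facts
    have hsfl0 : sfl k 0 = 0 := by unfold sfl; simp
    have hTT0 : TT k m 0 = l := by rw [TT_zero, hsum]
    have hTTtop : TT k m (k+1) = 0 := TT_top k m le_rfl
    have hD0 : D 0 = 0 := by rw [hDdef, hsfl0]; omega
    have hDk1 : D (k+1) = 0 := by rw [hDdef, hTTtop, sfl_succ_k]
    -- choose α : least index with D α = Dmax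
    obtain ⟨γ₁, hγ₁mem, hγ₁val⟩ := Finset.exists_mem_eq_sup (Finset.Icc 1 k)
      (Finset.nonempty_Icc.2 hk) D
    have hγ₁mem' : 1 ≤ γ₁ ∧ γ₁ ≤ k := by simpa [Finset.mem_Icc] using hγ₁mem
    have hex : ∃ γ, D γ = Dmax := ⟨γ₁, hγ₁val.symm⟩
    set α := Nat.find hex with hαdef
    have hαspec : D α = Dmax := Nat.find_spec hex
    have hαle : α ≤ γ₁ := Nat.find_min' hex hγ₁val.symm
    have hαk : α ≤ k := le_trans hαle hγ₁mem'.2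
    have hα1 : 1 ≤ α := by
      rcases Nat.eq_zero_or_pos α with h | h
      · exfalso; rw [h, hD0] at hαspec; omega
      · exact h
    have hprev : D (α-1) < Dmax := by
      have hne := Nat.find_min hex (show α - 1 < α by omega)
      have hle : D (α-1) ≤ Dmax := by
        rcases Nat.eq_zero_or_pos (α-1) with h | h
        · rw [h, hD0]; omega
        · exact hDle _ h (by omega)
      omega
    -- choose β : end of the plateau
    have hexQ : ∃ t, D (α + t + 1) ≠ Dmax := ⟨k - α, by
      rw [show α + (k - α) + 1 = k + 1 by omega, hDk1]; omega⟩
    set β := α + Nat.find hexQ with hβdef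
    have hβnext : D (β+1) ≠ Dmax := Nat.find_spec hexQ
    have hβk : β ≤ k := by
      have : Nat.find hexQ ≤ k - α := Nat.find_min' hexQ (by
        rw [show α + (k - α) + 1 = k + 1 by omega, hDk1]; omega)
      omega
    have hαβ : α ≤ β := by omega
    have hplateau : ∀ γ, α ≤ γ → γ ≤ β → D γ = Dmax := by
      intro γ hγ1 hγ2
      rcases Nat.eq_or_lt_of_le hγ1 with h | h
      · rw [← h]; exact hαspec
      · have htlt : γ - α - 1 < Nat.find hexQ := by omega
        have h2 := Nat.find_min hexQ htlt
        rw [show α + (γ - α - 1) + 1 = γ by omega] at h2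
        exact not_not.1 h2
    have hβnextlt : D (β+1) < Dmax := by
      have hle : D (β+1) ≤ Dmax := by
        rcases Nat.lt_or_ge β k with h | h
        · exact hDle _ (by omega) (by omega)
        · have hβ : β = k := by omega
          rw [hβ, hDk1]; omega
      omega
    clear hβnext hαle hαdef hβdef
    clear_value β α
    -- Fin indices
    set iF : Fin (k+1) := ⟨α-1, by omega⟩ with hiFdef
    set jF : Fin (k+1) := ⟨β, by omega⟩ with hjFdef
    have hiFval : (iF : ℕ) = α - 1 := rfl
    have hjFval : (jF : ℕ) = β := rfl
    have hij : iF ≠ jF := by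
      intro h
      rw [Fin.ext_iff, hiFval, hjFval] at h
      omega
    -- integer values
    have hTTval : ∀ γ, 1 ≤ γ → γ ≤ k → (TT k m γ : ℤ) = (sfl k γ : ℤ) - D γ := by
      intro γ h1 h2
      have h3 := htail γ h1 h2
      have hDγ := hDdef γ
      omega
    have hmiF : (m iF : ℤ) = (TT k m (α-1) : ℤ) - TT k m α := by
      have h := TT_succ k m iF
      rw [hiFval, show α - 1 + 1 = α by omega] at h
      omega
    have hmjF : (m jF : ℤ) = (TT k m β : ℤ) - TT k m (β+1) := by
      have h := TT_succ k m jF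
      rw [hjFval] at h
      omega
    have hTTα : (TT k m α : ℤ) = (sfl k α : ℤ) - Dmax := by
      rw [hTTval α hα1 hαk, hαspec]
    have hTTβ : (TT k m β : ℤ) = (sfl k β : ℤ) - Dmax := by
      rw [hTTval β (by omega) hβk, hplateau β hαβ le_rfl]
    have hTTβ1 : (TT k m (β+1) : ℤ) = (sfl k (β+1) : ℤ) - D (β+1) := by
      rcases Nat.lt_or_ge β k with h | h
      · exact hTTval _ (by omega) (by omega)
      · have hβ : β = k := by omega
        rw [hβ, hTTtop, sfl_succ_k]
        have := hDk1
        omega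
    have hmjF_ub : (m jF : ℤ) ≤ (sfl k β : ℤ) - sfl k (β+1) - 1 := by
      rw [hmjF, hTTβ, hTTβ1]
      have h1 : (D (β+1) : ℤ) < Dmax := by exact_mod_cast hβnextlt
      omega
    have hDprev : (D (α-1) : ℤ) + 1 ≤ Dmax := by exact_mod_cast hprev
    have hmiF_lb : (m jF : ℤ) + 1 ≤ m iF ∧ 1 ≤ (m iF : ℤ) := by
      rcases Nat.eq_or_lt_of_le hα1 with h1 | h1
      · have hα1' : α = 1 := h1.symm
        have hTTprev : (TT k m (α-1) : ℤ) = l := by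
          rw [show α - 1 = 0 by omega, hTT0]
        have hgap := floor_gap k (a := 1) (b := β) le_rfl (by omega)
        have hsub : sfl k 2 ≤ sfl k 1 := sfl_anti k le_rfl (by omega)
        rw [hα1'] at hTTα hmiF hTTprev
        rw [show (1:ℕ) + 1 = 2 from rfl] at hgap
        constructor <;> omega
      · have hTTprev : (TT k m (α-1) : ℤ) = (sfl k (α-1) : ℤ) - D (α-1) :=
          hTTval (α-1) (by omega) (by omega)
        have hgap := floor_gap k (a := α-1) (b := β) (by omega) (by omega)
        rw [show α - 1 + 1 = α by omega] at hgap
        have hsub : sfl k α ≤ sfl k (α-1) := by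
          have := sfl_anti k (a := α-1) (b := α) (by omega) (by omega)
          exact this
        constructor <;> omega
    have hmi1 : 1 ≤ m iF := by
      have := hmiF_lb.2; omega
    have hkey : m jF + 1 ≤ m iF := by
      have := hmiF_lb.1; omega
    -- the moved vector
    set m' := Function.update (Function.update m iF (m iF - 1)) jF (m jF + 1) with hm'def
    have hsum' : ∑ i, m' i = l := by
      have h := sum_move m iF jF hij hmi1 Finset.univ
      rw [← hm'def] at h
      simp only [Finset.mem_univ, if_pos] at h
      omega
    have hmem_iF : ∀ γ : ℕ,
        (iF ∈ Finset.univ.filter (fun i : Fin (k+1) => γ ≤ (i:ℕ))) ↔ γ ≤ α - 1 := by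
      intro γ; simp [hiFval]
    have hmem_jF : ∀ γ : ℕ,
        (jF ∈ Finset.univ.filter (fun i : Fin (k+1) => γ ≤ (i:ℕ))) ↔ γ ≤ β := by
      intro γ; simp [hjFval]
    have hTT' : ∀ γ : ℕ, TT k m' γ + (if γ ≤ α - 1 then 1 else 0)
        = TT k m γ + (if γ ≤ β then 1 else 0) := by
      intro γ
      have h := sum_move m iF jF hij hmi1
        (Finset.univ.filter (fun i : Fin (k+1) => γ ≤ (i:ℕ)))
      rw [← hm'def, if_congr (hmem_iF γ) rfl rfl, if_congr (hmem_jF γ) rfl rfl] at h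
      exact h
    have htail' : ∀ γ : ℕ, 1 ≤ γ → γ ≤ k → TT k m' γ ≤ sfl k γ := by
      intro γ h1 h2
      have h := hTT' γ
      have h3 := htail γ h1 h2
      by_cases hc1 : α ≤ γ ∧ γ ≤ β
      · have hDγ : D γ = Dmax := hplateau γ hc1.1 hc1.2
        have hDγ2 := hDdef γ
        rw [if_neg (by omega), if_pos (by omega)] at h
        omega
      · rcases (show (γ ≤ α - 1 ∧ γ ≤ β) ∨ (¬ γ ≤ α - 1 ∧ ¬ γ ≤ β) by omega) with hc | hc
        · rw [if_pos hc.1, if_pos hc.2] at h; omega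
        · rw [if_neg hc.1, if_neg hc.2] at h; omega
    have hdef' : ∑ γ ∈ Finset.Icc 1 k, (sfl k γ - TT k m' γ) ≤ d := by
      have hlt : ∑ γ ∈ Finset.Icc 1 k, (sfl k γ - TT k m' γ)
          < ∑ γ ∈ Finset.Icc 1 k, (sfl k γ - TT k m γ) := by
        apply Finset.sum_lt_sum
        · intro γ hγ
          have h := hTT' γ
          have hmono : TT k m γ ≤ TT k m' γ := by
            by_cases h1 : γ ≤ α - 1 <;> by_cases h2 : γ ≤ β <;>
              simp only [h1, h2, if_pos, if_neg, if_true, if_false] at h <;> omega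
          omega
        · refine ⟨α, by simp [Finset.mem_Icc]; omega, ?_⟩
          have h := hTT' α
          rw [if_neg (by omega), if_pos (by omega)] at h
          have h3 := htail α hα1 hαk
          have hDα2 := hDdef α
          omega
      omega
    calc Nat.multinomial Finset.univ m ≤ Nat.multinomial Finset.univ m' := by
          apply multinomial_le_of_prod_le
          · rw [hsum, hsum']
          · rw [hm'def]
            exact prod_move m iF jF hij hkey
      _ ≤ _ := ih m' hsum' htail' hdef'

/-- Among all nonnegative integer vectors `m = (m₀,…,m_k)` with `∑ mᵢ = ℓ` and
`∑_{i ≥ α} mᵢ ≤ ⌊√(k/α)⌋` for `α = 1,…,k`, the multinomial coefficient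
`ℓ!/(m₀!⋯m_k!)` is maximized by the vector `z` with `z₀ = ℓ − ⌊√k⌋` and
`zᵢ = ⌊√(k/i)⌋ − ⌊√(k/(i+1))⌋` for `i ≥ 1` (assuming `ℓ ≥ 2⌊√k⌋ − ⌊√(k/2)⌋`). -/
theorem multinomial_le_extremal (k l : ℕ) (hk : 1 ≤ k) (hl : 1 ≤ l)
    (hl2 : 2 * ⌊Real.sqrt k⌋₊ - ⌊Real.sqrt ((k : ℝ) / 2)⌋₊ ≤ l)
    (m : Fin (k + 1) → ℕ)
    (hsum : ∑ i, m i = l)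
    (htail : ∀ α : ℕ, 1 ≤ α → α ≤ k →
      ∑ i ∈ Finset.univ.filter (fun i : Fin (k + 1) => α ≤ (i : ℕ)), m i ≤
        ⌊Real.sqrt ((k : ℝ) / (α : ℝ))⌋₊) :
    Nat.multinomial Finset.univ m ≤
      Nat.multinomial Finset.univ (fun i : Fin (k + 1) =>
        if (i : ℕ) = 0 then l - ⌊Real.sqrt k⌋₊
        else ⌊Real.sqrt ((k : ℝ) / (i : ℕ))⌋₊ -
              ⌊Real.sqrt ((k : ℝ) / ((i : ℕ) + 1))⌋₊) := by
  have hs1 : sfl k 1 = ⌊Real.sqrt k⌋₊ := by unfold sfl; norm_num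
  have hs21 : sfl k 2 ≤ sfl k 1 := sfl_anti k le_rfl (by norm_num)
  have hl2' : 2 * sfl k 1 - sfl k 2 ≤ l := by
    rw [hs1]
    have h2 : sfl k 2 = ⌊Real.sqrt ((k:ℝ)/2)⌋₊ := by unfold sfl; norm_num
    rw [h2]; exact hl2
  have hl1 : sfl k 1 ≤ l := by omega
  have hz0 : (sfl k 1 : ℤ) - sfl k 2 ≤ (l : ℤ) - sfl k 1 := by omega
  have hzz : (fun i : Fin (k+1) => if (i:ℕ) = 0 then l - ⌊Real.sqrt k⌋₊
        else ⌊Real.sqrt ((k : ℝ) / (i : ℕ))⌋₊ - ⌊Real.sqrt ((k : ℝ) / ((i : ℕ) + 1))⌋₊)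
      = zz k l := by
    funext i
    by_cases h0 : (i:ℕ) = 0
    · simp [zz, h0, hs1]
    · simp only [zz, h0, if_neg, if_false]
      unfold sfl
      norm_num [Nat.cast_add]
  rw [hzz]
  exact main_ind k l hk hl1 hz0 (∑ γ ∈ Finset.Icc 1 k, (sfl k γ - TT k m γ)) m hsum htail le_rfl
end

section
/- Let k ≥ 1 and ℓ ≥ 1 be integers with ℓ ≥ 2·⌊√k⌋ − ⌊√(k/2)⌋. Define z₀ := ℓ − ⌊√k⌋ and z_i := ⌊√(k/i)⌋ − ⌊√(k/(i+1))⌋ for i = 1, …, k. Then for all integers a, b with 0 ≤ a < b ≤ k, we have z_a + 1 ≥ z_b. -/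
lemma inv_sqrt_diff_antitone (x y : ℝ) (hx : 1 ≤ x) (hxy : x ≤ y) :
    1 / Real.sqrt y - 1 / Real.sqrt (y + 1) ≤ 1 / Real.sqrt x - 1 / Real.sqrt (x + 1) := by
  have hx0 : (0:ℝ) < x := by linarith
  have hy0 : (0:ℝ) < y := by linarith
  set px := Real.sqrt x with hpx
  set qx := Real.sqrt (x+1) with hqx
  set py := Real.sqrt y with hpy
  set qy := Real.sqrt (y+1) with hqy
  have hpx0 : 0 < px := Real.sqrt_pos.2 hx0
  have hpy0 : 0 < py := Real.sqrt_pos.2 hy0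
  have hqx0 : 0 < qx := Real.sqrt_pos.2 (by linarith)
  have hqy0 : 0 < qy := Real.sqrt_pos.2 (by linarith)
  have hpxsq : px ^ 2 = x := Real.sq_sqrt hx0.le
  have hqxsq : qx ^ 2 = x + 1 := Real.sq_sqrt (by linarith)
  have hpysq : py ^ 2 = y := Real.sq_sqrt hy0.le
  have hqysq : qy ^ 2 = y + 1 := Real.sq_sqrt (by linarith)
  have hpxy : px ≤ py := Real.sqrt_le_sqrt hxy
  have hqxy : qx ≤ qy := Real.sqrt_le_sqrt (by linarith)
  have hfx : 1 / px - 1 / qx = 1 / (px * qx * (px + qx)) := by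
    rw [div_sub_div _ _ hpx0.ne' hqx0.ne']
    rw [div_eq_div_iff (by positivity) (by positivity)]
    linear_combination px * qx * hqxsq - px * qx * hpxsq
  have hfy : 1 / py - 1 / qy = 1 / (py * qy * (py + qy)) := by
    rw [div_sub_div _ _ hpy0.ne' hqy0.ne']
    rw [div_eq_div_iff (by positivity) (by positivity)]
    linear_combination py * qy * hqysq - py * qy * hpysq
  rw [hfx, hfy]
  apply one_div_le_one_div_of_le (by positivity)
  nlinarith [mul_le_mul hpxy hqxy hqx0.le hpy0.le]

lemma sqrt_div_diff_antitone (k x y : ℝ) (hk : 0 ≤ k) (hx : 1 ≤ x) (hxy : x ≤ y) :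
    Real.sqrt (k / y) - Real.sqrt (k / (y + 1)) ≤
      Real.sqrt (k / x) - Real.sqrt (k / (x + 1)) := by
  have h : ∀ t : ℝ, Real.sqrt (k / t) = Real.sqrt k * (1 / Real.sqrt t) := by
    intro t
    rw [Real.sqrt_div hk, div_eq_mul_one_div]
  rw [h, h, h, h, ← mul_sub, ← mul_sub]
  exact mul_le_mul_of_nonneg_left (inv_sqrt_diff_antitone x y hx hxy) (Real.sqrt_nonneg k)

/-- With `z₀ = ℓ − ⌊√k⌋` and `zᵢ = ⌊√(k/i)⌋ − ⌊√(k/(i+1))⌋` for `i = 1,…,k`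
(assuming `ℓ ≥ 2⌊√k⌋ − ⌊√(k/2)⌋`), for all `0 ≤ a < b ≤ k` we have `z_a + 1 ≥ z_b`. -/
theorem z_almost_decreasing (k l : ℕ) (hk : 1 ≤ k) (hl : 1 ≤ l)
    (hl2 : 2 * ⌊Real.sqrt k⌋₊ - ⌊Real.sqrt ((k : ℝ) / 2)⌋₊ ≤ l)
    (z : ℕ → ℕ)
    (hz0 : z 0 = l - ⌊Real.sqrt k⌋₊)
    (hz : ∀ i : ℕ, 1 ≤ i → i ≤ k →
      z i = ⌊Real.sqrt ((k : ℝ) / (i : ℝ))⌋₊ - ⌊Real.sqrt ((k : ℝ) / ((i : ℝ) + 1))⌋₊) :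
    ∀ a b : ℕ, a < b → b ≤ k → z b ≤ z a + 1 := by
  -- key step for 1 ≤ a < b ≤ k
  have key : ∀ a b : ℕ, 1 ≤ a → a < b → b ≤ k → z b ≤ z a + 1 := by
    intro a b ha hab hbk
    rw [hz a ha (le_trans (le_of_lt hab) hbk), hz b (le_trans ha (le_of_lt hab)) hbk]
    set A := ⌊Real.sqrt ((k : ℝ) / (a : ℝ))⌋₊ with hA
    set A' := ⌊Real.sqrt ((k : ℝ) / ((a : ℝ) + 1))⌋₊ with hA'
    set B := ⌊Real.sqrt ((k : ℝ) / (b : ℝ))⌋₊ with hB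
    set B' := ⌊Real.sqrt ((k : ℝ) / ((b : ℝ) + 1))⌋₊ with hB'
    have hreal : Real.sqrt ((k:ℝ) / (b:ℝ)) - Real.sqrt ((k:ℝ) / ((b:ℝ) + 1)) ≤
        Real.sqrt ((k:ℝ) / (a:ℝ)) - Real.sqrt ((k:ℝ) / ((a:ℝ) + 1)) :=
      sqrt_div_diff_antitone _ _ _ (by positivity) (by exact_mod_cast ha)
        (by exact_mod_cast hab.le)
    have h1 : (B : ℝ) ≤ Real.sqrt ((k:ℝ) / (b:ℝ)) := Nat.floor_le (Real.sqrt_nonneg _)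
    have h2 : Real.sqrt ((k:ℝ) / ((b:ℝ) + 1)) < B' + 1 := Nat.lt_floor_add_one _
    have h3 : Real.sqrt ((k:ℝ) / (a:ℝ)) < A + 1 := Nat.lt_floor_add_one _
    have h4 : (A' : ℝ) ≤ Real.sqrt ((k:ℝ) / ((a:ℝ) + 1)) := Nat.floor_le (Real.sqrt_nonneg _)
    have hcast : (B : ℝ) + A' < (A : ℝ) + B' + 2 := by linarith
    have hnat : B + A' < A + B' + 2 := by exact_mod_cast hcast
    omega
  intro a b hab hbk
  rcases Nat.eq_zero_or_pos a with rfl | ha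
  · -- a = 0
    set s := ⌊Real.sqrt (k:ℝ)⌋₊ with hs
    set t := ⌊Real.sqrt ((k:ℝ) / 2)⌋₊ with ht
    have hts : t ≤ s := by
      apply Nat.floor_le_floor
      apply Real.sqrt_le_sqrt
      have : (0:ℝ) ≤ (k:ℝ) := by positivity
      linarith [half_le_self this]
    have hz1 : z 1 = s - t := by
      have e2 : ((1:ℕ):ℝ) + 1 = 2 := by norm_num
      rw [hz 1 le_rfl hk, e2, Nat.cast_one, div_one]
    have hz1le : z 1 ≤ z 0 := by
      rw [hz1, hz0]
      omega
    rcases Nat.lt_or_ge 1 b with hb1 | hb1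
    · exact le_trans (key 1 b le_rfl hb1 hbk) (by omega)
    · have : b = 1 := by omega
      subst this
      omega
  · exact key a b ha hab hbk
end

section
/- There exist constants C > 0 and k₀ ≥ 1 such that for all integers k ≥ k₀ and all integers ℓ with ℓ ≥ 2·⌊√k⌋ − ⌊√(k/2)⌋, defining z₀ := ℓ − ⌊√k⌋ and z_i := ⌊√(k/i)⌋ − ⌊√(k/(i+1))⌋ for i = 1, …, k, the multinomial coefficient satisfies ℓ!/(z₀!·z₁!·⋯·z_k!) ≤ (ℓ/√k)^{√k} · e^{C·√k}. -/
open Finset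

/-- `n^n ≤ n! * e^n`. -/
private lemma emb_pow_le_fact : ∀ n : ℕ, (n : ℝ) ^ n ≤ (n.factorial : ℝ) * Real.exp n := by
  intro n
  induction n with
  | zero => simp
  | succ n ih =>
    have he : ((n : ℝ) + 1) ^ n ≤ (n : ℝ) ^ n * Real.exp 1 := by
      rcases Nat.eq_zero_or_pos n with h | h
      · subst h; simpa using Real.one_le_exp (by norm_num : (0:ℝ) ≤ 1)
      · have hn : (0 : ℝ) < n := by exact_mod_cast h
        have h1 : (n : ℝ) + 1 ≤ (n : ℝ) * Real.exp (1 / n) := by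
          have h2 := Real.add_one_le_exp (1 / (n : ℝ))
          have h3 : (n : ℝ) * (1 / n + 1) ≤ (n : ℝ) * Real.exp (1 / n) :=
            mul_le_mul_of_nonneg_left h2 hn.le
          calc (n : ℝ) + 1 = (n : ℝ) * (1 / n + 1) := by field_simp; ring
          _ ≤ (n : ℝ) * Real.exp (1 / n) := h3
        calc ((n : ℝ) + 1) ^ n ≤ ((n : ℝ) * Real.exp (1 / n)) ^ n :=
              pow_le_pow_left₀ (by positivity) h1 n
        _ = (n : ℝ) ^ n * Real.exp (1 / n) ^ n := mul_pow _ _ _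
        _ = (n : ℝ) ^ n * Real.exp 1 := by
              rw [← Real.exp_nat_mul]
              congr 1
              field_simp
    have hfe : (0:ℝ) ≤ (n:ℝ) + 1 := by positivity
    have hkey : ((n : ℝ) + 1) ^ (n + 1) ≤ ((n : ℝ) + 1) * ((n.factorial : ℝ) * Real.exp n * Real.exp 1) := by
      calc ((n : ℝ) + 1) ^ (n + 1) = ((n : ℝ) + 1) * ((n : ℝ) + 1) ^ n := by ring
      _ ≤ ((n : ℝ) + 1) * ((n : ℝ) ^ n * Real.exp 1) := by
            apply mul_le_mul_of_nonneg_left he hfe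
      _ ≤ ((n : ℝ) + 1) * ((n.factorial : ℝ) * Real.exp n * Real.exp 1) := by
            apply mul_le_mul_of_nonneg_left _ hfe
            exact mul_le_mul_of_nonneg_right ih (Real.exp_pos 1).le
    push_cast [Nat.factorial_succ]
    calc ((n : ℝ) + 1) ^ (n + 1) ≤ ((n : ℝ) + 1) * ((n.factorial : ℝ) * Real.exp n * Real.exp 1) := hkey
    _ = ((n : ℝ) + 1) * (n.factorial : ℝ) * Real.exp ((n : ℝ) + 1) := by
          rw [Real.exp_add]; ring

/-- `l! ≤ l^m * (l-m)!` for `m ≤ l`. -/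
private lemma emb_fact_le : ∀ (m l : ℕ), m ≤ l → l.factorial ≤ l ^ m * (l - m).factorial := by
  intro m
  induction m with
  | zero => intro l _; simp
  | succ m ih =>
    intro l h
    have hm : m ≤ l := by omega
    have h1 : l - m = (l - (m + 1)) + 1 := by omega
    calc l.factorial ≤ l ^ m * (l - m).factorial := ih l hm
    _ = l ^ m * ((l - (m + 1)) + 1).factorial := by rw [← h1]
    _ = l ^ m * (((l - (m + 1)) + 1) * (l - (m + 1)).factorial) := by rw [Nat.factorial_succ]
    _ ≤ l ^ m * (l * (l - (m + 1)).factorial) := by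
          apply Nat.mul_le_mul_left
          apply Nat.mul_le_mul_right
          omega
    _ = l ^ (m + 1) * (l - (m + 1)).factorial := by ring

private noncomputable def embS (k i : ℕ) : ℕ := ⌊Real.sqrt ((k : ℝ) / i)⌋₊

private lemma embS_anti (k : ℕ) {i j : ℕ} (hi : 1 ≤ i) (hij : i ≤ j) : embS k j ≤ embS k i := by
  apply Nat.floor_le_floor
  apply Real.sqrt_le_sqrt
  have hi' : (0 : ℝ) < i := by exact_mod_cast hi
  have hij' : (i : ℝ) ≤ j := by exact_mod_cast hij
  have hk : (0 : ℝ) ≤ k := by positivity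
  exact div_le_div_of_nonneg_left hk hi' hij'

private lemma embS_top (k : ℕ) : embS k (k + 1) = 0 := by
  apply Nat.floor_eq_zero.mpr
  have h1 : (k : ℝ) / ((k + 1 : ℕ) : ℝ) < 1 := by
    rw [div_lt_one (by positivity)]
    push_cast
    norm_num
  have h2 := Real.sqrt_lt_sqrt (by positivity) h1
  simpa using h2

private lemma embS_sum (k : ℕ) : ∀ n : ℕ,
    ∑ i ∈ Finset.Icc 1 n, (embS k i - embS k (i + 1)) = embS k 1 - embS k (n + 1) := by
  intro n
  induction n with
  | zero => simp
  | succ n ih =>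
    rw [Finset.sum_Icc_succ_top (by omega), ih]
    have h1 : embS k (n + 1 + 1) ≤ embS k (n + 1) := embS_anti k (by omega) (by omega)
    have h2 : embS k (n + 1) ≤ embS k 1 := embS_anti k (by omega) (by omega)
    omega

private lemma embS_prodblocks (k : ℕ) (g : ℕ → ℝ) : ∀ n : ℕ,
    (∏ i ∈ Finset.Icc 1 n, ∏ v ∈ Finset.Ioc (embS k (i + 1)) (embS k i), g v) =
      ∏ v ∈ Finset.Ioc (embS k (n + 1)) (embS k 1), g v := by
  intro n
  induction n with
  | zero => simp
  | succ n ih =>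
    rw [Finset.prod_Icc_succ_top (by omega), ih]
    have h1 : embS k (n + 1 + 1) ≤ embS k (n + 1) := embS_anti k (by omega) (by omega)
    have h2 : embS k (n + 1) ≤ embS k 1 := embS_anti k (by omega) (by omega)
    rw [mul_comm, Finset.prod_Ioc_consecutive g h1 h2]


set_option maxHeartbeats 1000000 in
/-- Per-layer bound: if `s(i+1) < v ≤ s(i)` then `v³ ≤ 12·k·zᵢ`. -/
private lemma emb_layer (k i v : ℕ) (hi : 1 ≤ i) (hv1 : embS k (i + 1) < v)
    (hv2 : v ≤ embS k i) :
    (v : ℝ) ^ 3 ≤ 12 * k * ((embS k i - embS k (i + 1) : ℕ) : ℝ) := by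
  set z : ℕ := embS k i - embS k (i + 1) with hz_def
  have hzle : embS k (i + 1) ≤ embS k i := embS_anti k hi (by omega)
  have hz1 : 1 ≤ z := by omega
  have hzcast : (z : ℝ) = (embS k i : ℝ) - (embS k (i + 1) : ℝ) := by
    rw [hz_def]; push_cast [Nat.cast_sub hzle]; ring
  set a : ℝ := Real.sqrt ((k : ℝ) / i) with ha_def
  set b : ℝ := Real.sqrt ((k : ℝ) / ((i + 1 : ℕ) : ℝ)) with hb_def
  set t : ℝ := Real.sqrt i with ht_def
  set u : ℝ := Real.sqrt (((i + 1 : ℕ) : ℝ)) with hu_def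
  have hi' : (1 : ℝ) ≤ (i : ℝ) := by exact_mod_cast hi
  have hknn : (0 : ℝ) ≤ (k : ℝ) := by positivity
  have ht1 : 1 ≤ t := by
    rw [ht_def, show (1:ℝ) = Real.sqrt 1 by simp]
    exact Real.sqrt_le_sqrt hi'
  have ht0 : 0 < t := by linarith
  have htne : t ≠ 0 := ne_of_gt ht0
  have hine : (i : ℝ) ≠ 0 := by positivity
  have ht2 : t ^ 2 = (i : ℝ) := Real.sq_sqrt (by linarith)
  have hu2 : u ^ 2 = (i : ℝ) + 1 := by
    rw [hu_def, Real.sq_sqrt (by positivity)]; push_cast; ring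
  have htu : t ≤ u := Real.sqrt_le_sqrt (by push_cast; linarith)
  have hu0 : 0 < u := lt_of_lt_of_le ht0 htu
  have hak : a = Real.sqrt k / t := by
    rw [ha_def, ht_def, Real.sqrt_div hknn]
  have hbk : b = Real.sqrt k / u := by
    rw [hb_def, hu_def, Real.sqrt_div hknn]
  have hsk : 0 ≤ Real.sqrt k := Real.sqrt_nonneg _
  -- v ≤ a and v² ≤ k/i
  have hva : (v : ℝ) ≤ a := by
    calc (v : ℝ) ≤ (embS k i : ℝ) := by exact_mod_cast hv2
    _ ≤ a := Nat.floor_le (Real.sqrt_nonneg _)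
  have hv0 : (0 : ℝ) ≤ v := by positivity
  have hvsq : (v : ℝ) ^ 2 ≤ (k : ℝ) / i := by
    have h1 : (v : ℝ) ^ 2 ≤ a ^ 2 := pow_le_pow_left₀ hv0 hva 2
    have h2 : a ^ 2 = (k : ℝ) / i := Real.sq_sqrt (by positivity)
    linarith
  -- z ≥ a - b - 1
  have hze : (z : ℝ) ≥ a - b - 1 := by
    have h1 : a < (embS k i : ℝ) + 1 := Nat.lt_floor_add_one a
    have h2 : (embS k (i + 1) : ℝ) ≤ b := Nat.floor_le (Real.sqrt_nonneg _)
    rw [hzcast]; linarith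
  -- a - b ≥ √k / (6 t³)
  have hut : (u - t) * (u + t) = 1 := by linear_combination hu2 - ht2
  have hupt : 0 < u + t := by linarith
  have h3 : u * t ≤ t ^ 2 + 1 := by nlinarith [mul_le_mul_of_nonneg_left htu hu0.le, hu2]
  have h4 : u * (u + t) ≤ 4 * t ^ 2 := by nlinarith [h3, hu2, ht1]
  have e1 : 6 * t ^ 2 * (u - t) * (u + t) = 6 * t ^ 2 := by linear_combination 6 * t ^ 2 * hut
  have hkey : u ≤ 6 * t ^ 2 * (u - t) := by nlinarith [e1, h4, hupt, ht1]
  have hab : a - b ≥ Real.sqrt k / (6 * t ^ 3) := by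
    rw [hak, hbk]
    rw [div_sub_div _ _ (ne_of_gt ht0) (ne_of_gt hu0)]
    rw [ge_iff_le, div_le_div_iff₀ (by positivity) (by positivity)]
    have : Real.sqrt k * (u - t) * (6 * t ^ 3) ≥ Real.sqrt k * (t * u) := by
      have h5 : t * u ≤ (u - t) * (6 * t ^ 3) := by nlinarith [hkey, ht0]
      nlinarith [mul_le_mul_of_nonneg_left h5 hsk]
    nlinarith [this]
  -- case analysis: v ≤ 12 i z
  have hvz : (v : ℝ) ≤ 12 * (i : ℝ) * (z : ℝ) := by
    have hz1' : (1 : ℝ) ≤ (z : ℝ) := by exact_mod_cast hz1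
    by_cases hcs : Real.sqrt k ≤ 12 * t ^ 3
    · have h6 : a ≤ 12 * t ^ 2 := by
        rw [hak, div_le_iff₀ ht0]
        nlinarith [hcs, ht0]
      calc (v : ℝ) ≤ a := hva
      _ ≤ 12 * t ^ 2 := h6
      _ = 12 * (i : ℝ) := by rw [ht2]
      _ ≤ 12 * (i : ℝ) * (z : ℝ) := by nlinarith [hi']
    · push_neg at hcs
      have h7 : Real.sqrt k / (6 * t ^ 3) ≥ 2 := by
        rw [ge_iff_le, le_div_iff₀ (by positivity)]
        nlinarith [hcs]
      have h8 : (z : ℝ) ≥ Real.sqrt k / (12 * t ^ 3) := by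
        have : Real.sqrt k / (12 * t ^ 3) = Real.sqrt k / (6 * t ^ 3) / 2 := by
          rw [div_div]
          ring_nf
        rw [this]
        linarith [hze, hab, h7]
      have h9 : 12 * (i : ℝ) * (z : ℝ) ≥ Real.sqrt k / t := by
        have h10 : 12 * t ^ 2 * (Real.sqrt k / (12 * t ^ 3)) = Real.sqrt k / t := by
          field_simp
        calc 12 * (i : ℝ) * (z : ℝ) = 12 * t ^ 2 * (z : ℝ) := by rw [ht2]
        _ ≥ 12 * t ^ 2 * (Real.sqrt k / (12 * t ^ 3)) := by nlinarith [h8, ht0]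
        _ = Real.sqrt k / t := h10
      calc (v : ℝ) ≤ a := hva
      _ = Real.sqrt k / t := hak
      _ ≤ 12 * (i : ℝ) * (z : ℝ) := h9
  -- conclude
  have hfin : (v : ℝ) ^ 3 ≤ (12 * (i : ℝ) * (z : ℝ)) * ((k : ℝ) / i) := by
    calc (v : ℝ) ^ 3 = (v : ℝ) * (v : ℝ) ^ 2 := by ring
    _ ≤ (12 * (i : ℝ) * (z : ℝ)) * ((k : ℝ) / i) := by
        apply mul_le_mul hvz hvsq (by positivity) (by positivity)
  have hieq : (12 * (i : ℝ) * (z : ℝ)) * ((k : ℝ) / i) = 12 * k * (z : ℝ) := by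
    field_simp
  linarith [hfin, hieq.le, hieq.ge]


set_option maxHeartbeats 1000000 in
/-- Core: `(√k)^m ≤ e^{11m} · ∏ zᵢ!` where `m = ⌊√k⌋`. -/
private lemma emb_core (k : ℕ) (hk : 4 ≤ k) :
    Real.sqrt k ^ (embS k 1) ≤ (Real.exp 11) ^ (embS k 1) *
      ∏ i ∈ Finset.Icc 1 k, (((embS k i - embS k (i + 1)).factorial : ℕ) : ℝ) := by
  set m : ℕ := embS k 1 with hm_def
  set P : ℝ := ∏ i ∈ Finset.Icc 1 k, (((embS k i - embS k (i + 1)).factorial : ℕ) : ℝ) with hP_def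
  have hk0 : (0 : ℝ) < 12 * k := by positivity
  have hsum : ∑ i ∈ Finset.Icc 1 k, (embS k i - embS k (i + 1)) = m := by
    have h := embS_sum k k
    rw [embS_top k] at h
    simpa using h
  -- Step A: block products
  have hblock : ∀ i ∈ Finset.Icc 1 k,
      (∏ v ∈ Finset.Ioc (embS k (i + 1)) (embS k i), ((v : ℝ) ^ 3 / (12 * k))) ≤
        ((embS k i - embS k (i + 1) : ℕ) : ℝ) ^ (embS k i - embS k (i + 1)) := by
    intro i hi
    obtain ⟨hi1, hik⟩ := Finset.mem_Icc.mp hi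
    have hcard : (Finset.Ioc (embS k (i + 1)) (embS k i)).card = embS k i - embS k (i + 1) :=
      Nat.card_Ioc _ _
    calc (∏ v ∈ Finset.Ioc (embS k (i + 1)) (embS k i), ((v : ℝ) ^ 3 / (12 * k)))
        ≤ ∏ v ∈ Finset.Ioc (embS k (i + 1)) (embS k i), ((embS k i - embS k (i + 1) : ℕ) : ℝ) := by
          apply Finset.prod_le_prod
          · intro v hv; positivity
          · intro v hv
            obtain ⟨hv1, hv2⟩ := Finset.mem_Ioc.mp hv
            rw [div_le_iff₀ hk0]
            have := emb_layer k i v hi1 hv1 hv2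
            linarith
    _ = ((embS k i - embS k (i + 1) : ℕ) : ℝ) ^ (embS k i - embS k (i + 1)) := by
          rw [Finset.prod_const, hcard]
  -- Step B
  have heq := embS_prodblocks k (fun v => (v : ℝ) ^ 3 / (12 * k)) k
  rw [embS_top k] at heq
  have hB : (∏ v ∈ Finset.Ioc 0 m, ((v : ℝ) ^ 3 / (12 * k))) ≤
      ∏ i ∈ Finset.Icc 1 k, ((embS k i - embS k (i + 1) : ℕ) : ℝ) ^ (embS k i - embS k (i + 1)) := by
    rw [← heq]
    apply Finset.prod_le_prod _ hblock
    intro i _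
    apply Finset.prod_nonneg
    intro v _
    positivity
  -- Step C : compute the left product
  have hfact : ∏ v ∈ Finset.Ioc 0 m, (v : ℝ) = (m.factorial : ℝ) := by
    rw [← Nat.cast_prod]
    congr 1
    have h1 : Finset.Ioc 0 m = Finset.Ico 1 (m + 1) := by
      ext x
      simp only [Finset.mem_Ioc, Finset.mem_Ico]
      omega
    rw [h1]
    exact Finset.prod_Ico_id_eq_factorial m
  have hC : (∏ v ∈ Finset.Ioc 0 m, ((v : ℝ) ^ 3 / (12 * k))) =
      (m.factorial : ℝ) ^ 3 / (12 * (k : ℝ)) ^ m := by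
    rw [Finset.prod_div_distrib, Finset.prod_pow, hfact, Finset.prod_const, Nat.card_Ioc]
    norm_num
  -- Step D
  have hEm : Real.exp (m : ℝ) = Real.exp 1 ^ m := by
    rw [← Real.exp_nat_mul]; norm_num
  have hD : (∏ i ∈ Finset.Icc 1 k, ((embS k i - embS k (i + 1) : ℕ) : ℝ) ^ (embS k i - embS k (i + 1)))
      ≤ P * Real.exp 1 ^ m := by
    calc (∏ i ∈ Finset.Icc 1 k, ((embS k i - embS k (i + 1) : ℕ) : ℝ) ^ (embS k i - embS k (i + 1)))
        ≤ ∏ i ∈ Finset.Icc 1 k,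
            (((embS k i - embS k (i + 1)).factorial : ℝ) *
              Real.exp ((embS k i - embS k (i + 1) : ℕ) : ℝ)) := by
          apply Finset.prod_le_prod
          · intro i _; positivity
          · intro i _; exact emb_pow_le_fact _
    _ = P * ∏ i ∈ Finset.Icc 1 k, Real.exp ((embS k i - embS k (i + 1) : ℕ) : ℝ) :=
          Finset.prod_mul_distrib
    _ = P * Real.exp 1 ^ m := by
          rw [← Real.exp_sum]
          congr 1
          rw [← hEm]
          congr 1
          rw [← Nat.cast_sum, hsum]
  -- key numeric inequality
  have hm2 : 2 ≤ m := by
    apply Nat.le_floor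
    rw [show ((2:ℕ):ℝ) = Real.sqrt 4 by
      rw [show (4:ℝ) = 2 ^ 2 by norm_num, Real.sqrt_sq (by norm_num)]; norm_num]
    apply Real.sqrt_le_sqrt
    simp only [Nat.cast_one, div_one]
    exact_mod_cast hk
  have hsknn : (0:ℝ) ≤ Real.sqrt k := Real.sqrt_nonneg _
  have h2m : Real.sqrt k ≤ 2 * (m : ℝ) := by
    have h1 : Real.sqrt ((k : ℝ) / ((1:ℕ) : ℝ)) < (m : ℝ) + 1 := Nat.lt_floor_add_one _
    have h2 : (1 : ℝ) ≤ (m : ℝ) := by exact_mod_cast (by omega : 1 ≤ m)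
    have h3 : Real.sqrt ((k : ℝ) / ((1:ℕ) : ℝ)) = Real.sqrt k := by norm_num
    linarith [h1, h2, h3.ge, h3.le]
  have hsk3 : (k : ℝ) * Real.sqrt k ≤ 8 * (m : ℝ) ^ 3 := by
    have h1 : Real.sqrt k ^ 3 ≤ (2 * (m : ℝ)) ^ 3 := pow_le_pow_left₀ hsknn h2m 3
    have h2 : Real.sqrt k ^ 3 = (k : ℝ) * Real.sqrt k := by
      rw [pow_succ, Real.sq_sqrt (by positivity : (0:ℝ) ≤ (k:ℝ))]
    nlinarith [h1, h2.le, h2.ge]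
  have hE2 : (2 : ℝ) ≤ Real.exp 1 := by linarith [Real.add_one_le_exp (1:ℝ)]
  have h128 : (128 : ℝ) ≤ Real.exp 1 ^ 7 := by
    calc (128 : ℝ) = 2 ^ 7 := by norm_num
    _ ≤ Real.exp 1 ^ 7 := pow_le_pow_left₀ (by norm_num) hE2 7
  have hexp11 : Real.exp 11 = Real.exp 1 ^ 11 := by
    rw [← Real.exp_nat_mul]; norm_num
  have hbase : Real.sqrt k * (12 * (k : ℝ)) * Real.exp 1 ^ 4 ≤ Real.exp 11 * (m : ℝ) ^ 3 := by
    have hm3nn : (0 : ℝ) ≤ (m : ℝ) ^ 3 := by positivity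
    have h1 : 12 * ((k : ℝ) * Real.sqrt k) ≤ Real.exp 1 ^ 7 * (m : ℝ) ^ 3 := by
      nlinarith [h128, hsk3, hm3nn]
    have h2 := mul_le_mul_of_nonneg_right h1 (le_of_lt (pow_pos (Real.exp_pos 1) 4))
    rw [hexp11]
    nlinarith [h2]
  -- assemble
  have hPpos : 0 < P := by
    apply Finset.prod_pos
    intro i _
    exact_mod_cast Nat.factorial_pos _
  have hfac3 : ((m.factorial : ℕ) : ℝ) ^ 3 ≤ (12 * (k : ℝ)) ^ m * (P * Real.exp 1 ^ m) := by
    have h5 : (∏ v ∈ Finset.Ioc 0 m, ((v : ℝ) ^ 3 / (12 * k))) ≤ P * Real.exp 1 ^ m :=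
      le_trans hB hD
    rw [hC, div_le_iff₀ (by positivity : (0:ℝ) < (12 * (k:ℝ)) ^ m)] at h5
    exact h5.trans_eq (by ring)
  set Q : ℝ := (12 * (k : ℝ)) ^ m * Real.exp 1 ^ m * (Real.exp 1 ^ m) ^ 3 with hQ_def
  have hQpos : 0 < Q := by positivity
  have hchain : Real.sqrt k ^ m * Q ≤ (Real.exp 11 ^ m * P) * Q := by
    calc Real.sqrt k ^ m * Q = (Real.sqrt k * (12 * (k : ℝ)) * Real.exp 1 ^ 4) ^ m := by
          rw [hQ_def]; ring
    _ ≤ (Real.exp 11 * (m : ℝ) ^ 3) ^ m := pow_le_pow_left₀ (by positivity) hbase m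
    _ = Real.exp 11 ^ m * ((m : ℝ) ^ m) ^ 3 := by ring
    _ ≤ Real.exp 11 ^ m * (((m.factorial : ℕ) : ℝ) * Real.exp 1 ^ m) ^ 3 := by
          apply mul_le_mul_of_nonneg_left _ (by positivity)
          apply pow_le_pow_left₀ (by positivity)
          rw [← hEm]
          exact emb_pow_le_fact m
    _ = Real.exp 11 ^ m * (((m.factorial : ℕ) : ℝ) ^ 3 * (Real.exp 1 ^ m) ^ 3) := by ring
    _ ≤ Real.exp 11 ^ m * (((12 * (k : ℝ)) ^ m * (P * Real.exp 1 ^ m)) * (Real.exp 1 ^ m) ^ 3) := by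
          apply mul_le_mul_of_nonneg_left _ (by positivity)
          exact mul_le_mul_of_nonneg_right hfac3 (by positivity)
    _ = (Real.exp 11 ^ m * P) * Q := by rw [hQ_def]; ring
  exact le_of_mul_le_mul_right hchain hQpos

/-- There exist `C > 0` and `k₀ ≥ 1` such that for all `k ≥ k₀` and all
`ℓ ≥ 2⌊√k⌋ − ⌊√(k/2)⌋`, the extremal multinomial coefficient with parts
`z₀ = ℓ − ⌊√k⌋`, `zᵢ = ⌊√(k/i)⌋ − ⌊√(k/(i+1))⌋` (`i = 1,…,k`) is at most
`(ℓ/√k)^{√k} · e^{C√k}`. -/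
theorem extremal_multinomial_bound :
    ∃ C : ℝ, 0 < C ∧ ∃ k₀ : ℕ, 1 ≤ k₀ ∧ ∀ k l : ℕ, k₀ ≤ k →
      2 * ⌊Real.sqrt k⌋₊ - ⌊Real.sqrt ((k : ℝ) / 2)⌋₊ ≤ l →
      ((Nat.multinomial Finset.univ (fun i : Fin (k + 1) =>
          if (i : ℕ) = 0 then l - ⌊Real.sqrt k⌋₊
          else ⌊Real.sqrt ((k : ℝ) / (i : ℕ))⌋₊ -
                ⌊Real.sqrt ((k : ℝ) / ((i : ℕ) + 1))⌋₊) : ℝ)) ≤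
        ((l : ℝ) / Real.sqrt k) ^ (Real.sqrt k) * Real.exp (C * Real.sqrt k) := by
  refine ⟨11, by norm_num, 100, by norm_num, ?_⟩
  intro k l hk hl
  set F : Fin (k + 1) → ℕ := fun i : Fin (k + 1) =>
          if (i : ℕ) = 0 then l - ⌊Real.sqrt k⌋₊
          else ⌊Real.sqrt ((k : ℝ) / (i : ℕ))⌋₊ -
                ⌊Real.sqrt ((k : ℝ) / ((i : ℕ) + 1))⌋₊ with hF_def
  set m : ℕ := ⌊Real.sqrt (k : ℝ)⌋₊ with hm_def
  have hm1 : embS k 1 = m := by rw [hm_def]; simp [embS]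
  -- basic numeric facts
  have hk' : (100 : ℝ) ≤ (k : ℝ) := by exact_mod_cast hk
  have hsknn : (0 : ℝ) ≤ Real.sqrt k := Real.sqrt_nonneg _
  have hsq10 : (10 : ℝ) ≤ Real.sqrt k := by
    rw [show (10 : ℝ) = Real.sqrt 100 by
      rw [show (100 : ℝ) = 10 ^ 2 by norm_num, Real.sqrt_sq (by norm_num)]]
    exact Real.sqrt_le_sqrt hk'
  have hskpos : (0 : ℝ) < Real.sqrt k := by linarith
  have hmle : (m : ℝ) ≤ Real.sqrt k := Nat.floor_le hsknn
  have hmlt : Real.sqrt k < (m : ℝ) + 1 := Nat.lt_floor_add_one _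
  have hf72 : ((⌊Real.sqrt ((k : ℝ) / 2)⌋₊ : ℕ) : ℝ) ≤ 0.72 * Real.sqrt k := by
    have h1 : ((⌊Real.sqrt ((k : ℝ) / 2)⌋₊ : ℕ) : ℝ) ≤ Real.sqrt ((k : ℝ) / 2) :=
      Nat.floor_le (Real.sqrt_nonneg _)
    have h2 : Real.sqrt ((k : ℝ) / 2) ≤ 0.72 * Real.sqrt k := by
      rw [show (0.72 : ℝ) * Real.sqrt k = Real.sqrt (0.5184 * k) by
        rw [Real.sqrt_mul (by norm_num) (k : ℝ)]
        congr 1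
        rw [show (0.5184 : ℝ) = 0.72 ^ 2 by norm_num, Real.sqrt_sq (by norm_num)]]
      apply Real.sqrt_le_sqrt
      linarith
    linarith
  have hl2 : 2 * m ≤ l + ⌊Real.sqrt ((k : ℝ) / 2)⌋₊ := by omega
  have hl2' : 2 * (m : ℝ) ≤ (l : ℝ) + ((⌊Real.sqrt ((k : ℝ) / 2)⌋₊ : ℕ) : ℝ) := by
    exact_mod_cast hl2
  have hlsk : Real.sqrt k ≤ (l : ℝ) := by nlinarith [hmlt, hf72, hl2', hsq10]
  have hml : m ≤ l := by
    have : (m : ℝ) ≤ (l : ℝ) := le_trans hmle hlsk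
    exact_mod_cast this
  -- sum and product of the parts
  have hFs : ∀ i : Fin k, F i.succ = embS k ((i : ℕ) + 1) - embS k ((i : ℕ) + 1 + 1) := by
    intro i
    rw [hF_def]
    simp only [Fin.val_succ]
    rw [if_neg (by omega)]
    norm_cast
  have hF0 : F 0 = l - m := by rw [hF_def]; simp
  have hrange : ∀ g : ℕ → ℕ,
      ∑ i ∈ Finset.Icc 1 k, g i = ∑ j ∈ Finset.range k, g (j + 1) := by
    intro g
    rw [← Finset.Ico_add_one_right_eq_Icc, Finset.sum_Ico_eq_sum_range]
    apply Finset.sum_congr rfl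
    intro j _
    congr 1
    omega
  have hsumz : ∑ j ∈ Finset.range k, (embS k (j + 1) - embS k (j + 1 + 1)) = m := by
    have h1 := embS_sum k k
    rw [embS_top k, Nat.sub_zero] at h1
    rw [← hrange (fun i => embS k i - embS k (i + 1)), h1, hm1]
  have hsumF : ∑ i, F i = l := by
    rw [Fin.sum_univ_succ, hF0]
    have h2 : ∑ i : Fin k, F i.succ =
        ∑ j ∈ Finset.range k, (embS k (j + 1) - embS k (j + 1 + 1)) := by
      rw [Finset.sum_congr rfl (fun i _ => hFs i)]
      exact Fin.sum_univ_eq_sum_range (fun j => embS k (j + 1) - embS k (j + 1 + 1)) k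
    rw [h2, hsumz]
    omega
  have hrangeP : ∀ g : ℕ → ℕ,
      ∏ i ∈ Finset.Icc 1 k, g i = ∏ j ∈ Finset.range k, g (j + 1) := by
    intro g
    rw [← Finset.Ico_add_one_right_eq_Icc, Finset.prod_Ico_eq_prod_range]
    apply Finset.prod_congr rfl
    intro j _
    congr 1
    omega
  have hprodF : ∏ i, (F i).factorial =
      (l - m).factorial * ∏ j ∈ Finset.Icc 1 k, (embS k j - embS k (j + 1)).factorial := by
    rw [Fin.prod_univ_succ, hF0]
    congr 1
    rw [hrangeP (fun j => (embS k j - embS k (j + 1)).factorial)]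
    rw [Finset.prod_congr rfl (fun i _ => by rw [hFs i])]
    exact Fin.prod_univ_eq_prod_range (fun j => (embS k (j + 1) - embS k (j + 1 + 1)).factorial) k
  -- the multinomial identity
  have hspec := Nat.multinomial_spec Finset.univ F
  rw [hsumF, hprodF] at hspec
  set N : ℕ := Nat.multinomial Finset.univ F with hN_def
  set P : ℝ := ∏ j ∈ Finset.Icc 1 k, (((embS k j - embS k (j + 1)).factorial : ℕ) : ℝ) with hP_def
  have hPcast : ((∏ j ∈ Finset.Icc 1 k, (embS k j - embS k (j + 1)).factorial : ℕ) : ℝ) = P := by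
    rw [hP_def]; push_cast; rfl
  have hPpos : 0 < P := by
    rw [hP_def]
    apply Finset.prod_pos
    intro i _
    exact_mod_cast Nat.factorial_pos _
  have hspecR : ((l - m).factorial : ℝ) * P * (N : ℝ) = (l.factorial : ℝ) := by
    rw [← hPcast]
    exact_mod_cast congrArg (Nat.cast : ℕ → ℝ) hspec
  have hflpos : (0 : ℝ) < ((l - m).factorial : ℝ) := by exact_mod_cast Nat.factorial_pos _
  have hfactle : (l.factorial : ℝ) ≤ (l : ℝ) ^ m * ((l - m).factorial : ℝ) := by
    exact_mod_cast emb_fact_le m l hml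
  have hNP : (N : ℝ) * P ≤ (l : ℝ) ^ m := by
    have h3 : ((N : ℝ) * P) * ((l - m).factorial : ℝ) ≤
        ((l : ℝ) ^ m) * ((l - m).factorial : ℝ) := by
      calc ((N : ℝ) * P) * ((l - m).factorial : ℝ) = (l.factorial : ℝ) := by
            rw [← hspecR]; ring
      _ ≤ (l : ℝ) ^ m * ((l - m).factorial : ℝ) := hfactle
    exact le_of_mul_le_mul_right h3 hflpos
  -- core estimate
  have hcore := emb_core k (by omega)
  rw [hm1] at hcore
  have hl1 : 1 ≤ (l : ℝ) / Real.sqrt k := (one_le_div hskpos).mpr hlsk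
  have hrp : ((l : ℝ) / Real.sqrt k) ^ m ≤ ((l : ℝ) / Real.sqrt k) ^ (Real.sqrt k) := by
    have h4 := Real.rpow_le_rpow_of_exponent_le hl1 hmle
    rwa [Real.rpow_natCast] at h4
  have hexpm : Real.exp 11 ^ m ≤ Real.exp (11 * Real.sqrt k) := by
    rw [← Real.exp_nat_mul]
    apply Real.exp_le_exp.mpr
    nlinarith [hmle]
  have hrpnn : (0 : ℝ) ≤ ((l : ℝ) / Real.sqrt k) ^ (Real.sqrt k) := by positivity
  have hchain : (N : ℝ) * P ≤
      (((l : ℝ) / Real.sqrt k) ^ (Real.sqrt k) * Real.exp (11 * Real.sqrt k)) * P := by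
    calc (N : ℝ) * P ≤ (l : ℝ) ^ m := hNP
    _ = ((l : ℝ) / Real.sqrt k) ^ m * Real.sqrt k ^ m := by
          rw [← mul_pow, div_mul_cancel₀ _ (ne_of_gt hskpos)]
    _ ≤ ((l : ℝ) / Real.sqrt k) ^ m * (Real.exp 11 ^ m * P) := by
          apply mul_le_mul_of_nonneg_left hcore (by positivity)
    _ ≤ ((l : ℝ) / Real.sqrt k) ^ (Real.sqrt k) * (Real.exp 11 ^ m * P) := by
          apply mul_le_mul_of_nonneg_right hrp (by positivity)
    _ ≤ ((l : ℝ) / Real.sqrt k) ^ (Real.sqrt k) * (Real.exp (11 * Real.sqrt k) * P) := by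
          apply mul_le_mul_of_nonneg_left _ hrpnn
          exact mul_le_mul_of_nonneg_right hexpm (le_of_lt hPpos)
    _ = (((l : ℝ) / Real.sqrt k) ^ (Real.sqrt k) * Real.exp (11 * Real.sqrt k)) * P := by
          ring
  exact le_of_mul_le_mul_right hchain hPpos
end

section
/- There exists a constant C > 0 such that for all integers k ≥ 2 and ℓ ≥ 2, the number of vectors m = (m₀, m₁, …, m_k) of nonnegative integers satisfying m₀ + m₁ + ⋯ + m_k = ℓ and, for every α = 1, …, k, Σ_{i=α}^{k} m_i ≤ √(k/α), is at most exp(C · k^{1/3} · (ln ℓ + ln k)). -/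
/-!
Put `t = ⌈k^{1/3}⌉`. The constraint at `α = t` bounds the tail `m_t + ⋯ + m_k` by
`√(k/t) ≤ t`, while each of the `t` head coordinates is at most `ℓ`. A vector whose tail sum is at
most `t` is the occupancy vector of some map `Fin t → Option (Fin (k + 1))`, so there are at most
`(ℓ + 1)^t (k + 2)^t ≤ exp (2t (ln ℓ + ln k))` such `m`, and `t ≤ 2 k^{1/3}`.
-/

open Finset Real

section Occupancy

variable {ι : Type*} [DecidableEq ι] {t : ℕ}

/-- `none` marks a slot of `f` that is left empty, so the occupancy numbers may sum to less
than `t`. -/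
def occupancy (f : Fin t → Option ι) (i : ι) : ℕ := #{j | f j = some i}

theorem occupancy_cons (o : Option ι) (f : Fin t → Option ι) (i : ι) :
    occupancy (Fin.cons o f : Fin (t + 1) → Option ι) i =
      (if o = some i then 1 else 0) + occupancy f i := by
  simp only [occupancy, card_filter, Fin.sum_univ_succ, Fin.cons_zero, Fin.cons_succ]

variable [Fintype ι]

theorem exists_occupancy_eq_of_sum_le (m : ι → ℕ) (hm : ∑ i, m i ≤ t) :
    ∃ f : Fin t → Option ι, occupancy f = m := by
  induction t generalizing m with
  | zero =>
    refine ⟨Fin.elim0, funext fun i => ?_⟩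
    simp only [occupancy, univ_eq_empty, filter_empty, card_empty]
    exact (sum_eq_zero_iff.mp (Nat.le_zero.mp hm) i (mem_univ i)).symm
  | succ t ih =>
    rcases le_or_gt (∑ i, m i) t with hle | hgt
    · obtain ⟨f, hf⟩ := ih m hle
      exact ⟨Fin.cons none f, funext fun i => by simp [occupancy_cons, hf]⟩
    · obtain ⟨i₀, -, hi₀⟩ := exists_ne_zero_of_sum_ne_zero (by omega : ∑ i, m i ≠ 0)
      obtain ⟨f, hf⟩ := ih (Function.update m i₀ (m i₀ - 1)) (by
        rw [sum_update_of_mem (mem_univ i₀), sdiff_singleton_eq_erase]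
        rw [← add_sum_erase _ _ (mem_univ i₀)] at hm
        omega)
      refine ⟨Fin.cons (some i₀) f, funext fun i => ?_⟩
      rw [occupancy_cons, hf]
      by_cases h : i = i₀
      · subst h
        simp only [↓reduceIte, Function.update_self]
        omega
      · simp [h, Ne.symm h]

theorem ncard_le_of_forall_le_of_sum_filter_le (p : ι → Prop) [DecidablePred p] (l t : ℕ)
    {s : Set (ι → ℕ)} (hs : ∀ m ∈ s, (∀ i, ¬ p i → m i ≤ l) ∧ ∑ i with p i, m i ≤ t) :
    s.ncard ≤ (l + 1) ^ #{i | ¬ p i} * (Fintype.card ι + 1) ^ t := by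
  let glue : ({i // ¬ p i} → Fin (l + 1)) × (Fin t → Option ι) → ι → ℕ :=
    fun hf i => if hi : p i then occupancy hf.2 i else hf.1 ⟨i, hi⟩
  have hsub : s ⊆ Set.range glue := by
    intro m hm
    obtain ⟨hhead, htail⟩ := hs m hm
    obtain ⟨f, hf⟩ := exists_occupancy_eq_of_sum_le (fun i => if p i then m i else 0)
      ((sum_filter _ _).symm.trans_le htail)
    refine ⟨(fun i => ⟨m i, Nat.lt_succ_of_le (hhead i i.2)⟩, f), funext fun i => ?_⟩
    by_cases hi : p i <;> simp [glue, hi, hf]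
  calc s.ncard ≤ (Set.range glue).ncard := Set.ncard_le_ncard hsub (Set.finite_range glue)
    _ ≤ Nat.card (({i // ¬ p i} → Fin (l + 1)) × (Fin t → Option ι)) := by
      rw [← Set.image_univ, ← Set.ncard_univ]
      exact Set.ncard_image_le Set.finite_univ
    _ = _ := by simp [Fintype.card_subtype]

end Occupancy

theorem le_natCeil_rpow_inv_pow {x : ℝ} (hx : 0 ≤ x) {n : ℕ} (hn : n ≠ 0) :
    x ≤ (⌈x ^ (n⁻¹ : ℝ)⌉₊ : ℝ) ^ n :=
  calc x = (x ^ (n⁻¹ : ℝ)) ^ n := (rpow_inv_natCast_pow hx hn).symm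
    _ ≤ _ := pow_le_pow_left₀ (by positivity) (Nat.le_ceil _) n

theorem sqrt_div_le_of_le_pow_three {x t : ℝ} (ht : 0 < t) (hx : x ≤ t ^ 3) : √(x / t) ≤ t := by
  rw [sqrt_le_left ht.le, div_le_iff₀ ht]
  linarith

theorem add_one_pow_mul_add_two_pow_le_exp {k l t : ℕ} {x : ℝ} (hk : 2 ≤ k) (hl : 2 ≤ l)
    (ht : (t : ℝ) ≤ 2 * x) :
    ((l + 1 : ℝ) ^ t * (k + 2) ^ t) ≤ exp (4 * x * (log l + log k)) := by
  have hk' : (2 : ℝ) ≤ k := by exact_mod_cast hk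
  have hl' : (2 : ℝ) ≤ l := by exact_mod_cast hl
  have hlog : 0 ≤ log l + log k := by
    have := log_nonneg (by linarith : (1 : ℝ) ≤ l)
    have := log_nonneg (by linarith : (1 : ℝ) ≤ k)
    linarith
  have hbase : (l + 1 : ℝ) * (k + 2) ≤ exp (2 * (log l + log k)) := by
    calc (l + 1 : ℝ) * (k + 2) ≤ l ^ 2 * k ^ 2 :=
          mul_le_mul (by nlinarith) (by nlinarith) (by positivity) (by positivity)
      _ = exp (2 * (log l + log k)) := by
        rw [← log_mul (by positivity) (by positivity), ← log_rpow (by positivity),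
          exp_log (by positivity), rpow_two, mul_pow]
  calc ((l + 1 : ℝ) ^ t * (k + 2) ^ t) = ((l + 1) * (k + 2)) ^ t := (mul_pow _ _ _).symm
    _ ≤ exp (2 * (log l + log k)) ^ t := pow_le_pow_left₀ (by positivity) hbase t
    _ = exp (t * (2 * (log l + log k))) := (exp_nat_mul _ _).symm
    _ ≤ exp (4 * x * (log l + log k)) := exp_le_exp.mpr (by nlinarith)

/-- There is a constant `C > 0` such that for all `k, ℓ ≥ 2`, the number of
nonnegative integer vectors `m = (m₀,…,m_k)` with `∑ mᵢ = ℓ` and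
`∑_{i ≥ α} mᵢ ≤ √(k/α)` for every `α = 1,…,k` is at most
`exp (C · k^{1/3} · (ln ℓ + ln k))`. -/
theorem count_m_vectors :
    ∃ C : ℝ, 0 < C ∧ ∀ k l : ℕ, 2 ≤ k → 2 ≤ l →
      (({m : Fin (k + 1) → ℕ |
          (∑ i, m i) = l ∧
          ∀ α : ℕ, 1 ≤ α → α ≤ k →
            ((∑ i ∈ Finset.univ.filter (fun i : Fin (k + 1) => α ≤ (i : ℕ)), m i : ℕ) : ℝ) ≤
              Real.sqrt ((k : ℝ) / (α : ℝ))}).ncard : ℝ) ≤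
        Real.exp (C * (k : ℝ) ^ ((1 : ℝ) / 3) * (Real.log l + Real.log k)) := by
  refine ⟨4, by norm_num, fun k l hk hl => ?_⟩
  set t := ⌈(k : ℝ) ^ ((1 : ℝ) / 3)⌉₊
  have hk1 : (1 : ℝ) ≤ k := by exact_mod_cast (by omega : 1 ≤ k)
  have hcbrt : 1 ≤ (k : ℝ) ^ ((1 : ℝ) / 3) := one_le_rpow hk1 (by norm_num)
  have ht1 : 1 ≤ t := Nat.one_le_ceil_iff.mpr (by linarith)
  have htk : t ≤ k := Nat.ceil_le.mpr (rpow_le_self_of_one_le hk1 (by norm_num))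
  have hkt : (k : ℝ) ≤ (t : ℝ) ^ 3 := by
    have := le_natCeil_rpow_inv_pow k.cast_nonneg (n := 3) (by norm_num)
    rwa [Nat.cast_ofNat, ← one_div] at this
  refine le_trans ?_ (add_one_pow_mul_add_two_pow_le_exp hk hl (Nat.ceil_le_two_mul (by linarith)))
  have hhead : #{i : Fin (k + 1) | ¬ t ≤ (i : ℕ)} = t := by
    simp only [not_le, Fin.card_filter_val_lt]
    omega
  refine le_of_le_of_eq (Nat.cast_le.mpr <|
    ncard_le_of_forall_le_of_sum_filter_le (fun i : Fin (k + 1) => t ≤ (i : ℕ)) l t ?_) ?_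
  · rintro m ⟨hsum, htail⟩
    refine ⟨fun i _ => hsum ▸ single_le_sum (fun _ _ => Nat.zero_le _) (mem_univ i), ?_⟩
    exact_mod_cast (htail t ht1 htk).trans (sqrt_div_le_of_le_pow_three (by positivity) hkt)
  · rw [hhead, Fintype.card_fin]
    push_cast
    ring
end

section
/- Let A be a type and let a, b, c ∈ A be pairwise distinct. Let w = w₁w₂⋯w_{2m} be a word (finite sequence) of even length 2m with m ≥ 1 such that every letter of w belongs to {a, b, c}, no two consecutive letters of w are equal (w_i ≠ w_{i+1} for 1 ≤ i < 2m), the first letter satisfies w₁ ≠ c, and the last letter satisfies w_{2m} ≠ c. Then there exists an index i with 1 ≤ i < 2m such that {w_i, w_{i+1}} = {a, b}, i.e. w contains ab or ba as two consecutive letters. -/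
/-- Every even-length word over a three-letter alphabet `{a,b,c}` with no two equal
consecutive letters, whose first and last letters differ from `c`, contains `ab` or
`ba` as a factor (two consecutive letters). -/
theorem even_word_contains_ab {A : Type*} (a b c : A)
    (hab : a ≠ b) (hac : a ≠ c) (hbc : b ≠ c)
    (m : ℕ) (hm : 1 ≤ m) (w : List A) (hne : w ≠ [])
    (hlen : w.length = 2 * m)
    (hmem : ∀ x ∈ w, x = a ∨ x = b ∨ x = c)
    (hchain : w.Chain' (· ≠ ·))
    (hfirst : w.head hne ≠ c)
    (hlast : w.getLast hne ≠ c) :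
    [a, b] <:+: w ∨ [b, a] <:+: w := by
  induction m generalizing w with
  | zero => omega
  | succ n ih =>
    match w, hne, hlen, hchain, hfirst, hlast with
    | x :: y :: rest, _, hlen, hchain, hfirst, hlast =>
      have hx : x = a ∨ x = b := by
        rcases hmem x (by simp) with h | h | h
        · exact Or.inl h
        · exact Or.inr h
        · exact absurd h hfirst
      obtain ⟨hxy, hchain'⟩ := List.isChain_cons_cons.mp hchain
      rcases hmem y (by simp) with hy | hy | hy
      · -- y = a, so x = b
        have hxb : x = b := hx.resolve_left (fun h => absurd (h.trans hy.symm) hxy)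
        exact Or.inr (List.IsPrefix.isInfix ⟨rest, by simp [hxb, hy]⟩)
      · have hxa : x = a := hx.resolve_right (fun h => absurd (h.trans hy.symm) hxy)
        exact Or.inl (List.IsPrefix.isInfix ⟨rest, by simp [hxa, hy]⟩)
      · -- y = c
        match rest with
        | [] =>
          exfalso; apply hlast; simp [hy]
        | z :: rest' =>
          have hn : 1 ≤ n := by simp at hlen; omega
          obtain ⟨hyz, hchain''⟩ := List.isChain_cons_cons.mp hchain'
          have hznil : (z :: rest') ≠ [] := by simp
          have hres := ih hn (z :: rest') hznil (by simp at hlen ⊢; omega)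
            (fun t ht => hmem t (by simp at ht ⊢; tauto)) hchain''
            (by simpa using fun h => hyz (hy.trans h.symm))
            (by simpa [List.getLast_cons] using hlast)
          have hsuf : (z :: rest') <:+: (x :: y :: z :: rest') :=
            List.IsSuffix.isInfix ⟨[x, y], rfl⟩
          rcases hres with h | h
          · exact Or.inl (h.trans hsuf)
          · exact Or.inr (h.trans hsuf)
end

section
/- Let k ≥ 1 be an integer and let S be a finite set of integers such that the number of positive elements of S plus the number of negative elements of S is at least 2k + 1. Then there exist s, t ∈ S such that either (i) s·t < 0 and min(|s|, |t|) ≥ k, or (ii) s·t > 0 and |s − t| ≥ k + 1. -/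
lemma card_le_span (T : Finset ℤ) (hT : T.Nonempty) :
    (T.card : ℤ) ≤ T.max' hT - T.min' hT + 1 := by
  have hsub : T ⊆ Finset.Icc (T.min' hT) (T.max' hT) := fun x hx =>
    Finset.mem_Icc.mpr ⟨T.min'_le x hx, T.le_max' x hx⟩
  have hc := Finset.card_le_card hsub
  rw [Int.card_Icc] at hc
  have hmm : T.min' hT ≤ T.max' hT := T.min'_le _ (T.max'_mem hT)
  have : ((T.max' hT + 1 - T.min' hT).toNat : ℤ) = T.max' hT + 1 - T.min' hT :=
    Int.toNat_of_nonneg (by omega)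
  omega

/-- If a finite set `S` of integers has at least `2k + 1` elements that are positive or
negative (counted together), then there are `s, t ∈ S` with either `s·t < 0` and
`min(|s|,|t|) ≥ k`, or `s·t > 0` and `|s − t| ≥ k + 1`. -/
theorem exists_pair_winding (k : ℕ) (hk : 1 ≤ k) (S : Finset ℤ)
    (h : 2 * k + 1 ≤ (S.filter (fun s => 0 < s)).card + (S.filter (fun s => s < 0)).card) :
    ∃ s ∈ S, ∃ t ∈ S,
      (s * t < 0 ∧ (k : ℤ) ≤ min |s| |t|) ∨ (0 < s * t ∧ (k : ℤ) + 1 ≤ |s - t|) := by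
  set P := S.filter (fun s => 0 < s) with hPdef
  set N := S.filter (fun s => s < 0) with hNdef
  have hPpos : ∀ x ∈ P, 0 < x := fun x hx => (Finset.mem_filter.mp hx).2
  have hNneg : ∀ x ∈ N, x < 0 := fun x hx => (Finset.mem_filter.mp hx).2
  have hPS : P ⊆ S := Finset.filter_subset _ _
  have hNS : N ⊆ S := Finset.filter_subset _ _
  by_cases hP : k + 2 ≤ P.card
  · have hPne : P.Nonempty := Finset.card_pos.mp (by omega)
    refine ⟨P.max' hPne, hPS (P.max'_mem hPne), P.min' hPne, hPS (P.min'_mem hPne), Or.inr ?_⟩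
    have h1 : 0 < P.max' hPne := hPpos _ (P.max'_mem hPne)
    have h2 : 0 < P.min' hPne := hPpos _ (P.min'_mem hPne)
    have h3 := card_le_span P hPne
    constructor
    · positivity
    · rw [abs_of_nonneg (by omega)]; omega
  · by_cases hN : k + 2 ≤ N.card
    · have hNne : N.Nonempty := Finset.card_pos.mp (by omega)
      refine ⟨N.max' hNne, hNS (N.max'_mem hNne), N.min' hNne, hNS (N.min'_mem hNne), Or.inr ?_⟩
      have h1 : N.max' hNne < 0 := hNneg _ (N.max'_mem hNne)
      have h2 : N.min' hNne < 0 := hNneg _ (N.min'_mem hNne)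
      have h3 := card_le_span N hNne
      constructor
      · exact mul_pos_of_neg_of_neg h1 h2
      · rw [abs_of_nonneg (by omega)]; omega
    · have hPk : k ≤ P.card := by omega
      have hNk : k ≤ N.card := by omega
      have hPne : P.Nonempty := Finset.card_pos.mp (by omega)
      have hNne : N.Nonempty := Finset.card_pos.mp (by omega)
      refine ⟨P.max' hPne, hPS (P.max'_mem hPne), N.min' hNne, hNS (N.min'_mem hNne), Or.inl ?_⟩
      have h1 : 0 < P.max' hPne := hPpos _ (P.max'_mem hPne)
      have h2 : 0 < P.min' hPne := hPpos _ (P.min'_mem hPne)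
      have h3 : N.min' hNne < 0 := hNneg _ (N.min'_mem hNne)
      have h4 : N.max' hNne < 0 := hNneg _ (N.max'_mem hNne)
      have h5 := card_le_span P hPne
      have h6 := card_le_span N hNne
      constructor
      · exact mul_neg_of_pos_of_neg h1 h3
      · rw [abs_of_pos h1, abs_of_neg h3]
        rw [le_min_iff]
        constructor <;> omega
end
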